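/- arXiv:1901.00490 — 6 statements merged into one kernel-verified Lean document; each statement's English description precedes it below -/
import Mathlib

section
/- Let A be an ℕ-graded k-algebra generated in degrees 0 and 1. If *₁ and *₂ are two 0-equivariant star products on A such that f *₁ a = f *₂ a for all f ∈ A₁ and all a ∈ A, then *₁ = *₂, i.e. a *₁ b = a *₂ b for all a, b ∈ A. (In other words, every 0-equivariant star product on A is uniquely determined by the k-linear maps a ↦ f * a − f a for f ∈ A₁.) -/
/-- A star product on an `ℕ`-graded `k`-algebra `A = ⊕ⱼ 𝒜 j`: an associative
`k`-bilinear operation `mul : A → A → A` such that for `a ∈ 𝒜 m` and `b ∈ 𝒜 n`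
the difference `mul a b - a * b` lies in `A_{<m+n} = ⊕_{j<m+n} 𝒜 j`. -/
structure StarProduct (k : Type*) {A : Type*} [Field k] [Ring A] [Algebra k A]
    (𝒜 : ℕ → Submodule k A) where
  mul : A → A → A
  add_left : ∀ a b c : A, mul (a + b) c = mul a c + mul b c
  add_right : ∀ a b c : A, mul a (b + c) = mul a b + mul a c
  smul_left : ∀ (r : k) (a b : A), mul (r • a) b = r • mul a b
  smul_right : ∀ (r : k) (a b : A), mul a (r • b) = r • mul a b
  assoc : ∀ a b c : A, mul (mul a b) c = mul a (mul b c)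
  lower : ∀ (m n : ℕ) (a b : A), a ∈ 𝒜 m → b ∈ 𝒜 n →
    mul a b - a * b ∈ ⨆ j < m + n, 𝒜 j

/-- A star product is `0`-equivariant if `a * h = ah` and `h * a = ha` for all
`h` of degree `0` and all `a`. -/
def StarProduct.ZeroEquivariant {k A : Type*} [Field k] [Ring A] [Algebra k A]
    {𝒜 : ℕ → Submodule k A} (s : StarProduct k 𝒜) : Prop :=
  ∀ h ∈ 𝒜 0, ∀ a : A, s.mul a h = a * h ∧ s.mul h a = h * a

/-! The `a` with `a *₁ b = a *₂ b` for all `b` form a subspace which, by associativity, is closed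
under `*₁`, and which contains `A₀` by `0`-equivariance and `A₁` by hypothesis. Generation in
degrees `0` and `1` gives `A_{n+1} = A₁ A_n`, and for `f ∈ A₁`, `a ∈ A_n` we have
`f a = f *₁ a - (f *₁ a - f a)` with the correction term in `A_{≤n}`; so induction on the degree
puts every `A_n` in the subspace. -/

open DirectSum

namespace GradedAlgebra

variable {k A : Type*} [CommSemiring k] [Semiring A] [Algebra k A]
  (𝒜 : ℕ → Submodule k A) [GradedAlgebra 𝒜]

theorem le_one_mul_of_adjoin_eq_top
    (hgen : Algebra.adjoin k ((𝒜 0 : Set A) ∪ (𝒜 1 : Set A)) = ⊤) (n : ℕ) :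
    𝒜 (n + 1) ≤ 𝒜 1 * 𝒜 n := by
  have graded (i j : ℕ) : 𝒜 i * 𝒜 j ≤ 𝒜 (i + j) :=
    Submodule.mul_le.2 fun _ ha _ hb => SetLike.mul_mem_graded ha hb
  suffices h : ∀ x : A, ∀ n, (decompose 𝒜 x (n + 1) : A) ∈ 𝒜 1 * 𝒜 n from
    fun a ha => by simpa only [decompose_of_mem_same 𝒜 ha] using h a n
  intro x
  have hx : x ∈ Algebra.adjoin k ((𝒜 0 : Set A) ∪ (𝒜 1 : Set A)) := hgen ▸ trivial
  induction hx using Algebra.adjoin_induction with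
  | mem x hx =>
    intro n
    rcases hx with hx | hx
    · rw [decompose_of_mem_ne 𝒜 hx (by omega)]
      exact zero_mem _
    · rcases eq_or_ne n 0 with rfl | hn
      · rw [decompose_of_mem_same 𝒜 hx]
        simpa using Submodule.mul_mem_mul hx (SetLike.one_mem_graded 𝒜)
      · rw [decompose_of_mem_ne 𝒜 hx (by omega)]
        exact zero_mem _
  | algebraMap r =>
    intro n
    rw [decompose_of_mem_ne 𝒜 (SetLike.algebraMap_mem_graded 𝒜 r) (by omega)]
    exact zero_mem _
  | add x y _ _ ihx ihy =>
    intro n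
    rw [decompose_add, DirectSum.add_apply, Submodule.coe_add]
    exact add_mem (ihx n) (ihy n)
  | mul x y _ _ ihx ihy =>
    intro n
    rw [decompose_mul, coe_mul_apply_eq_sum_antidiagonal, Finset.Nat.sum_antidiagonal_succ]
    refine add_mem ?_ (sum_mem fun p hp => ?_)
    · have h0 : 𝒜 0 * (𝒜 1 * 𝒜 n) ≤ 𝒜 1 * 𝒜 n := by
        rw [← mul_assoc]
        exact mul_le_mul_left (graded 0 1) _
      exact h0 (Submodule.mul_mem_mul (SetLike.coe_mem _) (ihy n))
    · have hp : 𝒜 1 * 𝒜 p.1 * 𝒜 p.2 ≤ 𝒜 1 * 𝒜 n := by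
        rw [mul_assoc, ← Finset.HasAntidiagonal.mem_antidiagonal.1 hp]
        exact mul_le_mul_right (graded _ _) _
      exact hp (Submodule.mul_mem_mul (ihx p.1) (SetLike.coe_mem _))

end GradedAlgebra

namespace StarProduct

variable {k A : Type*} [Field k] [Ring A] [Algebra k A] {𝒜 : ℕ → Submodule k A}

def toBilin (s : StarProduct k 𝒜) : A →ₗ[k] A →ₗ[k] A :=
  LinearMap.mk₂ k s.mul s.add_left s.smul_left s.add_right s.smul_right

theorem mem_eqLocus_toBilin {s₁ s₂ : StarProduct k 𝒜} {a : A} :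
    a ∈ LinearMap.eqLocus s₁.toBilin s₂.toBilin ↔ ∀ b, s₁.mul a b = s₂.mul a b :=
  LinearMap.ext_iff

theorem mul_mem_eqLocus_toBilin {s₁ s₂ : StarProduct k 𝒜} {a b : A}
    (ha : a ∈ LinearMap.eqLocus s₁.toBilin s₂.toBilin)
    (hb : b ∈ LinearMap.eqLocus s₁.toBilin s₂.toBilin) :
    s₁.mul a b ∈ LinearMap.eqLocus s₁.toBilin s₂.toBilin := by
  rw [mem_eqLocus_toBilin] at *
  intro c
  rw [s₁.assoc, hb, ha, ← s₂.assoc, ← ha]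

theorem eq_top_of_mul_mem [GradedAlgebra 𝒜] (s : StarProduct k 𝒜)
    (hgen : Algebra.adjoin k ((𝒜 0 : Set A) ∪ (𝒜 1 : Set A)) = ⊤) {T : Submodule k A}
    (h0 : 𝒜 0 ≤ T) (hmul : ∀ f ∈ 𝒜 1, ∀ a ∈ T, s.mul f a ∈ T) : T = ⊤ := by
  have hle : ∀ n, 𝒜 n ≤ T := by
    intro n
    induction n using Nat.strong_induction_on with
    | _ n ih =>
      rcases n with _ | n
      · exact h0
      refine (GradedAlgebra.le_one_mul_of_adjoin_eq_top 𝒜 hgen n).trans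
        (Submodule.mul_le.2 fun f hf a ha => ?_)
      have hlower : s.mul f a - f * a ∈ T :=
        iSup₂_le (fun j hj => ih j (by omega)) (s.lower 1 n f a hf ha)
      simpa only [sub_sub_cancel] using sub_mem (hmul f hf a (ih n n.lt_succ_self ha)) hlower
  rw [eq_top_iff, ← (Decomposition.isInternal 𝒜).submodule_iSup_eq_top]
  exact iSup_le hle

end StarProduct

/-- If `A` is an `ℕ`-graded `k`-algebra generated in degrees `0` and `1`, then any
two `0`-equivariant star products on `A` which agree on pairs `(f, a)` with
`f ∈ A₁`, `a ∈ A` are equal. -/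
theorem zeroEquivariant_starProduct_ext
    {k A : Type*} [Field k] [Ring A] [Algebra k A]
    (𝒜 : ℕ → Submodule k A) [GradedAlgebra 𝒜]
    (hgen : Algebra.adjoin k ((𝒜 0 : Set A) ∪ (𝒜 1 : Set A)) = ⊤)
    (s₁ s₂ : StarProduct k 𝒜)
    (h₁ : s₁.ZeroEquivariant) (h₂ : s₂.ZeroEquivariant)
    (hagree : ∀ f ∈ 𝒜 1, ∀ a : A, s₁.mul f a = s₂.mul f a) :
    ∀ a b : A, s₁.mul a b = s₂.mul a b := by
  let T := LinearMap.eqLocus s₁.toBilin s₂.toBilin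
  have hzero : 𝒜 0 ≤ T := fun h hh =>
    StarProduct.mem_eqLocus_toBilin.2 fun b => by rw [(h₁ h hh b).2, (h₂ h hh b).2]
  have hone : 𝒜 1 ≤ T := fun f hf => StarProduct.mem_eqLocus_toBilin.2 (hagree f hf)
  have hT : T = ⊤ := s₁.eq_top_of_mul_mem hgen hzero fun f hf a ha =>
    StarProduct.mul_mem_eqLocus_toBilin (hone hf) ha
  have hbilin : s₁.toBilin = s₂.toBilin := LinearMap.eqLocus_eq_top.1 hT
  exact fun a b => LinearMap.congr_fun (LinearMap.congr_fun hbilin a) b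
end

section
/- Let A be an ℕ-graded k-algebra generated in degrees 0 and 1, and let U be a graded subalgebra of A (a unital subalgebra with U = ⊕_j U_j, where U_j = U ∩ A_j) such that the k-span of A₀·U and the k-span of U·A₀ both equal A. If *₁ and *₂ are two 0-equivariant star products on A such that f *₁ b = f *₂ b for all f ∈ U₁ and all b ∈ U, then *₁ = *₂, i.e. a *₁ b = a *₂ b for all a, b ∈ A. (In other words, every 0-equivariant star product on A is uniquely determined by the k-linear maps b ↦ f * b − f b for f ∈ U₁, b ∈ U.) -/
/-!
Let `E` be the subspace of left arguments `a` with `s₁.mul a = s₂.mul a`. Zero-equivariance puts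
`A₀` into `E` and makes `E` stable under left multiplication by `A₀`. An `f ∈ U₁` lies in `E`:
`s₁.mul f` and `s₂.mul f` agree on `U` and commute with right multiplication by `A₀`, and `U·A₀`
spans `A`. Projecting `A = span (A₀·U)` to degree `1` (using that `U` is graded) gives
`A₁ = A₀·U₁ ⊆ E`. Generation in degrees `0` and `1` gives `A_{m+1} = A₁·A_m`, and for `f ∈ A₁`,
`y ∈ A_m` we have `f y = f * y - (f * y - f y)` with the correction term of degree `≤ m`, so
associativity and induction on the degree give `E = A`.
-/

open DirectSum

section Grading

theorem isHomogeneous_of_eq_iSup_inf {ι R M : Type*} [DecidableEq ι] [Semiring R]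
    [AddCommMonoid M] [Module R M] {ℳ : ι → Submodule R M} [Decomposition ℳ]
    {N : Submodule R M} (hN : N = ⨆ i, N ⊓ ℳ i) : SetLike.IsHomogeneous ℳ N := by
  intro i x hx
  rw [hN] at hx
  refine Submodule.iSup_induction _ (motive := fun x => (decompose ℳ x i : M) ∈ N) hx
    (fun j y hy => ?_) (by simp) (fun y z hy hz => by simpa using N.add_mem hy hz)
  by_cases hji : j = i
  · subst hji
    rw [decompose_of_mem_same ℳ hy.2]
    exact hy.1
  · rw [decompose_of_mem_ne ℳ hy.2 hji]
    exact N.zero_mem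

variable {R A : Type*} [CommSemiring R] [Semiring A] [Algebra R A]
  {𝒜 : ℕ → Submodule R A} [GradedAlgebra 𝒜]

theorem grade_mul_grade_le (i j : ℕ) : 𝒜 i * 𝒜 j ≤ 𝒜 (i + j) :=
  Submodule.mul_le.2 fun _ ha _ hb => SetLike.mul_mem_graded ha hb

theorem le_degZero_mul_inf {N : Submodule R A} (hN : SetLike.IsHomogeneous 𝒜 N)
    (h : 𝒜 0 * N = ⊤) (n : ℕ) : 𝒜 n ≤ 𝒜 0 * (N ⊓ 𝒜 n) := by
  have hproj : 𝒜 0 * N ≤ (𝒜 0 * (N ⊓ 𝒜 n)).comap (GradedAlgebra.proj 𝒜 n) :=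
    Submodule.mul_le.2 fun a ha b hb => by
      rw [Submodule.mem_comap, GradedAlgebra.proj_apply,
        coe_decompose_mul_of_left_mem_zero 𝒜 ha]
      exact Submodule.mul_mem_mul ha ⟨hN n hb, (decompose 𝒜 b n).2⟩
  intro x hx
  simpa [decompose_of_mem_same 𝒜 hx] using hproj (h ▸ trivial : x ∈ 𝒜 0 * N)

/-- The right ideal generated by `𝒜 1`, together with `𝒜 0`, is a subalgebra. -/
theorem degZero_sup_degOne_mul_top_eq_top
    (hgen : Algebra.adjoin R ((𝒜 0 : Set A) ∪ (𝒜 1 : Set A)) = ⊤) :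
    𝒜 0 ⊔ 𝒜 1 * ⊤ = ⊤ := by
  set I := 𝒜 0 ⊔ 𝒜 1 * ⊤
  have hmul : I * I ≤ I := by
    have h00 : 𝒜 0 * 𝒜 0 ≤ 𝒜 0 := grade_mul_grade_le 0 0
    have h01 : 𝒜 0 * 𝒜 1 ≤ 𝒜 1 := by simpa using grade_mul_grade_le 0 1
    rw [Submodule.sup_mul, Submodule.mul_sup, ← mul_assoc, mul_assoc (𝒜 1)]
    refine sup_le (sup_le (h00.trans le_sup_left) ?_) ?_
    · exact le_sup_of_le_right (by gcongr)
    · exact le_sup_of_le_right (by gcongr; exact le_top)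
  have hsub : Algebra.adjoin R ((𝒜 0 : Set A) ∪ (𝒜 1 : Set A)) ≤
      I.toSubalgebra (Submodule.mem_sup_left (SetLike.one_mem_graded 𝒜))
        (fun _ _ hx hy => hmul (Submodule.mul_mem_mul hx hy)) := by
    refine Algebra.adjoin_le (Set.union_subset (fun x hx => Submodule.mem_sup_left hx)
      fun x hx => Submodule.mem_sup_right ?_)
    simpa using Submodule.mul_mem_mul hx (Submodule.mem_top : (1 : A) ∈ ⊤)
  rw [hgen, top_le_iff] at hsub
  exact congrArg Subalgebra.toSubmodule hsub

theorem le_degOne_mul_of_adjoin_eq_top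
    (hgen : Algebra.adjoin R ((𝒜 0 : Set A) ∪ (𝒜 1 : Set A)) = ⊤) (m : ℕ) :
    𝒜 (m + 1) ≤ 𝒜 1 * 𝒜 m := by
  have hproj : 𝒜 0 ⊔ 𝒜 1 * ⊤ ≤ (𝒜 1 * 𝒜 m).comap (GradedAlgebra.proj 𝒜 (m + 1)) := by
    refine sup_le (fun h hh => ?_) (Submodule.mul_le.2 fun f hf a _ => ?_) <;>
      rw [Submodule.mem_comap, GradedAlgebra.proj_apply]
    · rw [decompose_of_mem_ne 𝒜 hh (by omega)]
      exact Submodule.zero_mem _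
    · rw [coe_decompose_mul_of_left_mem_of_le 𝒜 hf (by omega), Nat.add_sub_cancel]
      exact Submodule.mul_mem_mul hf (decompose 𝒜 a m).2
  intro x hx
  have hxI : x ∈ 𝒜 0 ⊔ 𝒜 1 * ⊤ := (degZero_sup_degOne_mul_top_eq_top hgen).symm ▸ trivial
  simpa [decompose_of_mem_same 𝒜 hx] using hproj hxI

end Grading

namespace StarProduct

variable {k A : Type*} [Field k] [Ring A] [Algebra k A] {𝒜 : ℕ → Submodule k A}

def lmul (s : StarProduct k 𝒜) : A →ₗ[k] A →ₗ[k] A :=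
  LinearMap.mk₂ k s.mul s.add_left s.smul_left s.add_right s.smul_right

@[simp]
theorem lmul_apply (s : StarProduct k 𝒜) (a b : A) : s.lmul a b = s.mul a b := rfl

theorem ZeroEquivariant.mul_mul_left {s : StarProduct k 𝒜} (hs : s.ZeroEquivariant)
    {h : A} (hh : h ∈ 𝒜 0) (a b : A) : s.mul (h * a) b = h * s.mul a b := by
  rw [← (hs h hh a).2, s.assoc, (hs h hh _).2]

theorem ZeroEquivariant.mul_mul_right {s : StarProduct k 𝒜} (hs : s.ZeroEquivariant)
    {h : A} (hh : h ∈ 𝒜 0) (a b : A) : s.mul a (b * h) = s.mul a b * h := by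
  rw [← (hs h hh b).1, ← s.assoc, (hs h hh _).1]

def leftEqLocus (s₁ s₂ : StarProduct k 𝒜) : Submodule k A :=
  LinearMap.eqLocus s₁.lmul s₂.lmul

variable {s₁ s₂ : StarProduct k 𝒜}

theorem mem_leftEqLocus {a : A} :
    a ∈ leftEqLocus s₁ s₂ ↔ ∀ b, s₁.mul a b = s₂.mul a b :=
  LinearMap.ext_iff

theorem leftEqLocus_eq_top_iff : leftEqLocus s₁ s₂ = ⊤ ↔ ∀ a b, s₁.mul a b = s₂.mul a b := by
  simp only [Submodule.eq_top_iff', mem_leftEqLocus]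

theorem degZero_le_leftEqLocus (h₁ : s₁.ZeroEquivariant) (h₂ : s₂.ZeroEquivariant) :
    𝒜 0 ≤ leftEqLocus s₁ s₂ := fun h hh =>
  mem_leftEqLocus.2 fun b => by rw [(h₁ h hh b).2, (h₂ h hh b).2]

theorem degZero_mul_leftEqLocus_le (h₁ : s₁.ZeroEquivariant) (h₂ : s₂.ZeroEquivariant) :
    𝒜 0 * leftEqLocus s₁ s₂ ≤ leftEqLocus s₁ s₂ :=
  Submodule.mul_le.2 fun h hh a ha => mem_leftEqLocus.2 fun b => by
    rw [h₁.mul_mul_left hh, h₂.mul_mul_left hh, mem_leftEqLocus.1 ha]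

theorem mem_leftEqLocus_of_eqOn (h₁ : s₁.ZeroEquivariant) (h₂ : s₂.ZeroEquivariant)
    {N : Submodule k A} (hN : N * 𝒜 0 = ⊤) {f : A} (hf : ∀ u ∈ N, s₁.mul f u = s₂.mul f u) :
    f ∈ leftEqLocus s₁ s₂ := by
  have hle : N * 𝒜 0 ≤ LinearMap.eqLocus (s₁.lmul f) (s₂.lmul f) :=
    Submodule.mul_le.2 fun u hu h hh => by
      simp only [LinearMap.mem_eqLocus, lmul_apply]
      rw [h₁.mul_mul_right hh, h₂.mul_mul_right hh, hf u hu]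
  rw [hN] at hle
  exact mem_leftEqLocus.2 fun b => hle Submodule.mem_top

theorem mul_mem_leftEqLocus {a b : A} (ha : a ∈ leftEqLocus s₁ s₂)
    (hb : b ∈ leftEqLocus s₁ s₂) (hab : s₁.mul a b - a * b ∈ leftEqLocus s₁ s₂) :
    a * b ∈ leftEqLocus s₁ s₂ := by
  rw [mem_leftEqLocus] at ha hb hab ⊢
  intro c
  have expand : ∀ s : StarProduct k 𝒜, s.mul a b = s₁.mul a b →
      s.mul (a * b) c = s.mul a (s.mul b c) - s.mul (s₁.mul a b - a * b) c := by
    intro s hs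
    calc s.mul (a * b) c = s.lmul (s.mul a b - (s₁.mul a b - a * b)) c := by
          rw [hs, sub_sub_cancel, lmul_apply]
      _ = s.mul a (s.mul b c) - s.mul (s₁.mul a b - a * b) c := by
          rw [map_sub, LinearMap.sub_apply, lmul_apply, lmul_apply, s.assoc]
  rw [expand s₁ rfl, expand s₂ (ha b).symm, hb, ha, hab]

theorem leftEqLocus_eq_top [GradedAlgebra 𝒜]
    (hgen : Algebra.adjoin k ((𝒜 0 : Set A) ∪ (𝒜 1 : Set A)) = ⊤)
    (h0 : 𝒜 0 ≤ leftEqLocus s₁ s₂) (h1 : 𝒜 1 ≤ leftEqLocus s₁ s₂) :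
    leftEqLocus s₁ s₂ = ⊤ := by
  have hgrade : ∀ m, 𝒜 m ≤ leftEqLocus s₁ s₂ := by
    intro m
    induction m using Nat.strong_induction_on with
    | _ m ih =>
      cases m with
      | zero => exact h0
      | succ m =>
        refine (le_degOne_mul_of_adjoin_eq_top hgen m).trans
          (Submodule.mul_le.2 fun f hf y hy => ?_)
        refine mul_mem_leftEqLocus (h1 hf) (ih m (by omega) hy) ?_
        exact iSup₂_le (fun j hj => ih j (by omega)) (s₁.lower 1 m f y hf hy)
  rw [eq_top_iff, ← (Decomposition.isInternal 𝒜).submodule_iSup_eq_top]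
  exact iSup_le hgrade

end StarProduct

open StarProduct in
/-- Let `A` be an `ℕ`-graded `k`-algebra generated in degrees `0` and `1`, and let
`U` be a graded subalgebra of `A` such that the spans of `A₀·U` and of `U·A₀` are
all of `A`.  Then any two `0`-equivariant star products on `A` which agree on
pairs `(f, b)` with `f ∈ U₁ = U ∩ A₁` and `b ∈ U` are equal. -/
theorem zeroEquivariant_starProduct_ext_of_subalgebra
    {k A : Type*} [Field k] [Ring A] [Algebra k A]
    (𝒜 : ℕ → Submodule k A) [GradedAlgebra 𝒜]
    (hgen : Algebra.adjoin k ((𝒜 0 : Set A) ∪ (𝒜 1 : Set A)) = ⊤)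
    (U : Subalgebra k A)
    (hUgraded : Subalgebra.toSubmodule U = ⨆ j : ℕ, Subalgebra.toSubmodule U ⊓ 𝒜 j)
    (hleft : Submodule.span k {x : A | ∃ h ∈ 𝒜 0, ∃ u ∈ U, x = h * u} = ⊤)
    (hright : Submodule.span k {x : A | ∃ u ∈ U, ∃ h ∈ 𝒜 0, x = u * h} = ⊤)
    (s₁ s₂ : StarProduct k 𝒜)
    (h₁ : s₁.ZeroEquivariant) (h₂ : s₂.ZeroEquivariant)
    (hagree : ∀ f ∈ U, f ∈ 𝒜 1 → ∀ b ∈ U, s₁.mul f b = s₂.mul f b) :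
    ∀ a b : A, s₁.mul a b = s₂.mul a b := by
  have hA0U : 𝒜 0 * Subalgebra.toSubmodule U = ⊤ := by
    rw [Submodule.mul_eq_span_mul_set, ← hleft]
    congr 1; ext; simp [Set.mem_mul, eq_comm]
  have hUA0 : Subalgebra.toSubmodule U * 𝒜 0 = ⊤ := by
    rw [Submodule.mul_eq_span_mul_set, ← hright]
    congr 1; ext; simp [Set.mem_mul, eq_comm]
  have hU1 : Subalgebra.toSubmodule U ⊓ 𝒜 1 ≤ leftEqLocus s₁ s₂ := fun f hf =>
    mem_leftEqLocus_of_eqOn h₁ h₂ hUA0 (hagree f hf.1 hf.2)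
  have hA1 : 𝒜 1 ≤ leftEqLocus s₁ s₂ :=
    calc 𝒜 1 ≤ 𝒜 0 * (Subalgebra.toSubmodule U ⊓ 𝒜 1) :=
          le_degZero_mul_inf (isHomogeneous_of_eq_iSup_inf hUgraded) hA0U 1
      _ ≤ 𝒜 0 * leftEqLocus s₁ s₂ := by gcongr
      _ ≤ leftEqLocus s₁ s₂ := degZero_mul_leftEqLocus_le h₁ h₂
  exact leftEqLocus_eq_top_iff.1 (leftEqLocus_eq_top hgen (degZero_le_leftEqLocus h₁ h₂) hA1)
end

section
/- Let A and B be ℕ-graded k-algebras, let * be a star product on A and ⋆ a star product on B. Let η : A → B be a k-linear map which is a homomorphism of graded algebras for the original products (η(A_j) ⊆ B_j for all j, η(ab) = η(a)η(b), η(1) = 1) and which is also an algebra homomorphism for the star products (η(a * b) = η(a) ⋆ η(b) for all a, b ∈ A). Let S ⊆ ker(η) be a set of homogeneous elements such that ker(η) equals the k-span of { a·s·b : a, b ∈ A, s ∈ S }. Then ker(η) also equals the k-span of { a * s * b : a, b ∈ A, s ∈ S }, i.e. S generates ker(η) as a two-sided ideal with respect to the star products as well. -/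
open DirectSum

lemma biSup_lt_mono {α : Type*} [CompleteLattice α] (f : ℕ → α) {M N : ℕ} (h : M ≤ N) :
    ⨆ j < M, f j ≤ ⨆ j < N, f j :=
  biSup_mono fun _ hj => lt_of_lt_of_le hj h

theorem DirectSum.mem_of_forall_decompose_mem {ι M σ P : Type*} [DecidableEq ι]
    [AddCommMonoid M] [SetLike σ M] [AddSubmonoidClass σ M] {ℳ : ι → σ} [Decomposition ℳ]
    [SetLike P M] [AddSubmonoidClass P M] {p : P} {z : M}
    (h : ∀ i, (decompose ℳ z i : M) ∈ p) : z ∈ p := by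
  classical
  rw [← sum_support_decompose ℳ z]
  exact sum_mem fun i _ => h i

theorem LinearMap.apply₂_mem_of_homogeneous {R M N P ι κ : Type*} [CommSemiring R]
    [AddCommMonoid M] [Module R M] [AddCommMonoid N] [Module R N] [AddCommMonoid P] [Module R P]
    [DecidableEq ι] [DecidableEq κ] (ℳ : ι → Submodule R M) [Decomposition ℳ]
    (𝒩 : κ → Submodule R N) [Decomposition 𝒩] (B : M →ₗ[R] N →ₗ[R] P) {p : Submodule R P}
    (h : ∀ i j, ∀ x ∈ ℳ i, ∀ y ∈ 𝒩 j, B x y ∈ p) (x : M) (y : N) : B x y ∈ p := by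
  induction x using Decomposition.inductionOn ℳ with
  | zero => simp
  | add x x' hx hx' => simpa using add_mem hx hx'
  | @homogeneous i x =>
    induction y using Decomposition.inductionOn 𝒩 with
    | zero => simp
    | add y y' hy hy' => simpa using add_mem hy hy'
    | @homogeneous j y => exact h i j x x.2 y y.2

section GradedAlgebra

variable {R A B : Type*} [CommSemiring R] [Semiring A] [Algebra R A] [Semiring B] [Algebra R B]
  {𝒜 : ℕ → Submodule R A} [GradedAlgebra 𝒜] {ℬ : ℕ → Submodule R B} [GradedAlgebra ℬ]

lemma DirectSum.decompose_eq_zero_of_mem_iSup_lt {N i : ℕ} (hi : N ≤ i) {z : A}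
    (hz : z ∈ ⨆ j < N, 𝒜 j) : (decompose 𝒜 z i : A) = 0 := by
  suffices (⨆ j < N, 𝒜 j) ≤ LinearMap.ker (GradedAlgebra.proj 𝒜 i) by
    simpa [GradedAlgebra.proj_apply] using this hz
  exact iSup₂_le fun j hj y hy => by
    simpa [GradedAlgebra.proj_apply] using decompose_of_mem_ne 𝒜 hy (by omega)

lemma AlgHom.map_decompose_eq_zero {η : A →ₐ[R] B} (hgraded : ∀ j, ∀ a ∈ 𝒜 j, η a ∈ ℬ j)
    {z : A} (hz : η z = 0) (i : ℕ) : η (decompose 𝒜 z i) = 0 := by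
  simpa [hz] using map_directSumDecompose 𝒜 ℬ (GradedAlgHom.mk η (hgraded _ _)) (x := z) (i := i)

lemma mem_of_mem_iSup_lt_of_map_eq_zero {η : A →ₐ[R] B} (hgraded : ∀ j, ∀ a ∈ 𝒜 j, η a ∈ ℬ j)
    {p : Submodule R A} {N : ℕ} (hp : ∀ j < N, ∀ z ∈ 𝒜 j, η z = 0 → z ∈ p) {w : A}
    (hw : w ∈ ⨆ j < N, 𝒜 j) (hηw : η w = 0) : w ∈ p := by
  refine mem_of_forall_decompose_mem (ℳ := 𝒜) fun j => ?_
  by_cases hj : j < N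
  · exact hp j hj _ (decompose 𝒜 w j).2 (AlgHom.map_decompose_eq_zero hgraded hηw j)
  · rw [decompose_eq_zero_of_mem_iSup_lt (not_lt.1 hj) hw]
    exact zero_mem p

end GradedAlgebra

namespace StarProduct

variable {k A : Type*} [Field k] [Ring A] [Algebra k A] {𝒜 : ℕ → Submodule k A}
  (s : StarProduct k 𝒜)

def mulₗ : A →ₗ[k] A →ₗ[k] A :=
  LinearMap.mk₂ k s.mul s.add_left s.smul_left s.add_right s.smul_right

lemma zero_mul (b : A) : s.mul 0 b = 0 := s.mulₗ.map_zero₂ b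

lemma mul_zero (a : A) : s.mul a 0 = 0 := (s.mulₗ a).map_zero

lemma mul_sub (a u v : A) : s.mul a (u - v) = s.mul a u - s.mul a v := (s.mulₗ a).map_sub u v

def idealSpan (S : Set A) : Submodule k A :=
  Submodule.span k {y : A | ∃ a b : A, ∃ x ∈ S, y = s.mul a (s.mul x b)}

section Filtration

variable [SetLike.GradedMonoid 𝒜]

lemma mul_mem_iSup_lt_succ {m n : ℕ} {a b : A} (ha : a ∈ 𝒜 m) (hb : b ∈ 𝒜 n) :
    s.mul a b ∈ ⨆ j < m + n + 1, 𝒜 j := by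
  rw [← sub_add_cancel (s.mul a b) (a * b)]
  refine add_mem (biSup_lt_mono 𝒜 (Nat.le_succ _) (s.lower m n a b ha hb)) ?_
  exact Submodule.mem_iSup_of_mem (m + n)
    (Submodule.mem_iSup_of_mem (Nat.lt_succ_self _) (SetLike.mul_mem_graded ha hb))

lemma mul_mem_iSup_lt {m N : ℕ} {a u : A} (ha : a ∈ 𝒜 m) (hu : u ∈ ⨆ j < N, 𝒜 j) :
    s.mul a u ∈ ⨆ j < m + N, 𝒜 j := by
  suffices (⨆ j < N, 𝒜 j) ≤ (⨆ j < m + N, 𝒜 j).comap (s.mulₗ a) from this hu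
  exact iSup₂_le fun j hj v hv => biSup_lt_mono 𝒜 (by omega) (s.mul_mem_iSup_lt_succ ha hv)

lemma mul_mul_sub_mul_mul_mem {m d n : ℕ} {a x b : A} (ha : a ∈ 𝒜 m) (hx : x ∈ 𝒜 d)
    (hb : b ∈ 𝒜 n) : s.mul a (s.mul x b) - a * x * b ∈ ⨆ j < m + d + n, 𝒜 j := by
  have hsplit : s.mul a (s.mul x b) - a * x * b =
      s.mul a (s.mul x b - x * b) + (s.mul a (x * b) - a * (x * b)) := by
    rw [s.mul_sub, mul_assoc]
    abel
  rw [hsplit, add_assoc]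
  exact add_mem (s.mul_mem_iSup_lt ha (s.lower d n x b hx hb))
    (s.lower m (d + n) a (x * b) ha (SetLike.mul_mem_graded hx hb))

end Filtration

section Kernel

variable [GradedAlgebra 𝒜] {B : Type*} [Ring B] [Algebra k B] {ℬ : ℕ → Submodule k B}
  [GradedAlgebra ℬ] {η : A →ₐ[k] B} {S : Set A}

lemma mul_mul_mem_idealSpan (hSker : ∀ x ∈ S, η x = 0)
    (hI : s.idealSpan S ≤ LinearMap.ker η.toLinearMap) {m d n : ℕ} {a x b : A} (ha : a ∈ 𝒜 m)
    (hxS : x ∈ S) (hx : x ∈ 𝒜 d) (hb : b ∈ 𝒜 n)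
    (hlow : ∀ w ∈ ⨆ j < m + d + n, 𝒜 j, η w = 0 → w ∈ s.idealSpan S) :
    a * x * b ∈ s.idealSpan S := by
  have hgen : s.mul a (s.mul x b) ∈ s.idealSpan S := Submodule.subset_span ⟨a, b, x, hxS, rfl⟩
  have hηgen : η (s.mul a (s.mul x b)) = 0 := hI hgen
  have hηw : η (s.mul a (s.mul x b) - a * x * b) = 0 := by
    simp [hηgen, hSker x hxS]
  rw [← sub_sub_cancel (s.mul a (s.mul x b)) (a * x * b)]
  exact sub_mem hgen (hlow _ (s.mul_mul_sub_mul_mul_mem ha hx hb) hηw)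

lemma mem_idealSpan_of_homogeneous (hgraded : ∀ j, ∀ a ∈ 𝒜 j, η a ∈ ℬ j)
    (hShomog : ∀ x ∈ S, ∃ j : ℕ, x ∈ 𝒜 j) (hSker : ∀ x ∈ S, η x = 0)
    (hker : LinearMap.ker η.toLinearMap =
      Submodule.span k {y : A | ∃ a b : A, ∃ x ∈ S, y = a * x * b})
    (hI : s.idealSpan S ≤ LinearMap.ker η.toLinearMap) {N : ℕ}
    (ih : ∀ j < N, ∀ z ∈ 𝒜 j, η z = 0 → z ∈ s.idealSpan S) {z : A} (hz : z ∈ 𝒜 N)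
    (hηz : η z = 0) : z ∈ s.idealSpan S := by
  have hlow : ∀ w ∈ ⨆ j < N, 𝒜 j, η w = 0 → w ∈ s.idealSpan S :=
    fun w hw hηw => mem_of_mem_iSup_lt_of_map_eq_zero hgraded ih hw hηw
  have hproj : ∀ x ∈ S, ∀ a b, GradedAlgebra.proj 𝒜 N (a * x * b) ∈ s.idealSpan S := by
    intro x hxS
    obtain ⟨d, hx⟩ := hShomog x hxS
    refine LinearMap.apply₂_mem_of_homogeneous 𝒜 𝒜
      (((LinearMap.mul k A).comp (LinearMap.mulRight k x)).compr₂ (GradedAlgebra.proj 𝒜 N))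
      fun m n a ha b hb => ?_
    have habx : a * x * b ∈ 𝒜 (m + d + n) :=
      SetLike.mul_mem_graded (SetLike.mul_mem_graded ha hx) hb
    simp only [LinearMap.compr₂_apply, LinearMap.comp_apply, LinearMap.mul_apply',
      LinearMap.mulRight_apply, GradedAlgebra.proj_apply]
    by_cases hN : m + d + n = N
    · subst hN
      rw [decompose_of_mem_same 𝒜 habx]
      exact s.mul_mul_mem_idealSpan hSker hI ha hxS hx hb hlow
    · rw [decompose_of_mem_ne 𝒜 habx hN]
      exact zero_mem _
  have hspan : Submodule.span k {y : A | ∃ a b : A, ∃ x ∈ S, y = a * x * b} ≤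
      (s.idealSpan S).comap (GradedAlgebra.proj 𝒜 N) :=
    Submodule.span_le.2 fun _ ⟨a, b, x, hxS, hy⟩ => hy ▸ hproj x hxS a b
  have hzspan : z ∈ Submodule.span k {y : A | ∃ a b : A, ∃ x ∈ S, y = a * x * b} := by
    rw [← hker]
    exact hηz
  simpa [GradedAlgebra.proj_apply, decompose_of_mem_same 𝒜 hz] using hspan hzspan

end Kernel

end StarProduct

/-- Let `A`, `B` be `ℕ`-graded `k`-algebras with star products `s`, `t`, and let
`η : A → B` be a graded algebra homomorphism for the original products which is also
an algebra homomorphism for the star products.  If `S ⊆ ker η` is a set of homogeneous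
elements generating `ker η` as a two-sided ideal for the original products, then `S`
also generates `ker η` as a two-sided ideal with respect to the star products. -/
theorem starProduct_kernel_generators
    {k A B : Type*} [Field k] [Ring A] [Algebra k A] [Ring B] [Algebra k B]
    (𝒜 : ℕ → Submodule k A) [GradedAlgebra 𝒜]
    (ℬ : ℕ → Submodule k B) [GradedAlgebra ℬ]
    (s : StarProduct k 𝒜) (t : StarProduct k ℬ)
    (η : A →ₐ[k] B)
    (hgraded : ∀ (j : ℕ), ∀ a ∈ 𝒜 j, η a ∈ ℬ j)
    (hstar : ∀ a b : A, η (s.mul a b) = t.mul (η a) (η b))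
    (S : Set A)
    (hShomog : ∀ x ∈ S, ∃ j : ℕ, x ∈ 𝒜 j)
    (hSker : ∀ x ∈ S, η x = 0)
    (hker : LinearMap.ker η.toLinearMap =
      Submodule.span k {y : A | ∃ a b : A, ∃ x ∈ S, y = a * x * b}) :
    LinearMap.ker η.toLinearMap =
      Submodule.span k {y : A | ∃ a b : A, ∃ x ∈ S, y = s.mul a (s.mul x b)} := by
  have hI : s.idealSpan S ≤ LinearMap.ker η.toLinearMap := Submodule.span_le.2 <| by
    rintro _ ⟨a, b, x, hxS, rfl⟩
    simp [hstar, hSker x hxS, t.zero_mul, t.mul_zero]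
  have hhomog : ∀ N, ∀ z ∈ 𝒜 N, η z = 0 → z ∈ s.idealSpan S := by
    intro N
    induction N using Nat.strong_induction_on with
    | _ N ih => exact fun z => s.mem_idealSpan_of_homogeneous hgraded hShomog hSker hker hI ih
  refine le_antisymm (fun z hz => mem_of_forall_decompose_mem (ℳ := 𝒜) fun j => ?_) hI
  exact hhomog j _ (decompose 𝒜 z j).2 (AlgHom.map_decompose_eq_zero hgraded hz j)
end

section
/- Let U be a Hopf algebra over a field k, let ℛ⁽⁰⁾ be an algebra automorphism of U⊗U, and let R⁽¹⁾ ∈ U⊗U be an invertible element such that: (RR1) Ad(R⁽¹⁾)∘ℛ⁽⁰⁾∘Δ = Δ^op as maps U → U⊗U; (RR2) (Δ⊗id_U)∘ℛ⁽⁰⁾ = ℛ⁽⁰⁾₁₃∘ℛ⁽⁰⁾₂₃∘(Δ⊗id_U); (RR3) (id_U⊗Δ)∘ℛ⁽⁰⁾ = ℛ⁽⁰⁾₁₃∘ℛ⁽⁰⁾₁₂∘(id_U⊗Δ); (RR4) (Δ⊗id_U)(R⁽¹⁾) = R⁽¹⁾₁₃ · ℛ⁽⁰⁾₁₃(R⁽¹⁾₂₃);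 (RR5) (id_U⊗Δ)(R⁽¹⁾) = R⁽¹⁾₁₃ · ℛ⁽⁰⁾₁₃(R⁽¹⁾₁₂). Then ℛ := Ad(R⁽¹⁾)∘ℛ⁽⁰⁾ satisfies conditions (wq1), (wq2) and (wq3), i.e. (U, ℛ) is a weakly quasitriangular Hopf algebra. -/
open TensorProduct

noncomputable section

variable (k : Type*) [Field k]

/-- Conjugation by a unit, as a `k`-algebra automorphism. -/
def adUnit {A : Type*} [Ring A] [Algebra k A] (u : Aˣ) : A ≃ₐ[k] A where
  toFun a := ↑u * a * ↑u⁻¹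
  invFun a := ↑u⁻¹ * a * ↑u
  left_inv a := by simp [mul_assoc]
  right_inv a := by simp [mul_assoc]
  map_add' a b := by noncomm_ring
  map_mul' a b := by
    show ↑u * (a * b) * ↑u⁻¹ = ↑u * a * ↑u⁻¹ * (↑u * b * ↑u⁻¹)
    simp [mul_assoc]
  commutes' r := by
    show ↑u * algebraMap k A r * ↑u⁻¹ = algebraMap k A r
    rw [← Algebra.commutes r (↑u : A), mul_assoc, Units.mul_inv, mul_one]

variable (U : Type*) [Ring U] [HopfAlgebra k U]

/-- The coproduct `Δ : U → U ⊗ U` as an algebra homomorphism. -/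
abbrev Δ : U →ₐ[k] U ⊗[k] U := Bialgebra.comulAlgHom k U

/-- The opposite coproduct `Δᵒᵖ = σ ∘ Δ`. -/
def Δop : U →ₐ[k] U ⊗[k] U :=
  (Algebra.TensorProduct.comm k U U).toAlgHom.comp (Bialgebra.comulAlgHom k U)

/-- The flip of the last two tensor factors of `(U ⊗ U) ⊗ U`. -/
def σ23 : ((U ⊗[k] U) ⊗[k] U) ≃ₐ[k] ((U ⊗[k] U) ⊗[k] U) :=
  (Algebra.TensorProduct.assoc k k k U U U).trans <|
    (Algebra.TensorProduct.congr AlgEquiv.refl (Algebra.TensorProduct.comm k U U)).trans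
      (Algebra.TensorProduct.assoc k k k U U U).symm

variable {k U}

/-- `F₁₂ = F ⊗ id` on `(U ⊗ U) ⊗ U`. -/
def leg12 (F : (U ⊗[k] U) ≃ₐ[k] (U ⊗[k] U)) :
    ((U ⊗[k] U) ⊗[k] U) ≃ₐ[k] ((U ⊗[k] U) ⊗[k] U) :=
  Algebra.TensorProduct.congr F AlgEquiv.refl

/-- `F₂₃ = id ⊗ F` on `(U ⊗ U) ⊗ U` (transported along the associator). -/
def leg23 (F : (U ⊗[k] U) ≃ₐ[k] (U ⊗[k] U)) :
    ((U ⊗[k] U) ⊗[k] U) ≃ₐ[k] ((U ⊗[k] U) ⊗[k] U) :=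
  (Algebra.TensorProduct.assoc k k k U U U).trans <|
    (Algebra.TensorProduct.congr AlgEquiv.refl F).trans
      (Algebra.TensorProduct.assoc k k k U U U).symm

/-- `F₁₃ = σ₂₃ ∘ F₁₂ ∘ σ₂₃` on `(U ⊗ U) ⊗ U`. -/
def leg13 (F : (U ⊗[k] U) ≃ₐ[k] (U ⊗[k] U)) :
    ((U ⊗[k] U) ⊗[k] U) ≃ₐ[k] ((U ⊗[k] U) ⊗[k] U) :=
  (σ23 k U).trans ((leg12 F).trans (σ23 k U))

/-- `u₁₂ = u ⊗ 1` in `(U ⊗ U) ⊗ U`. -/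
def el12 (u : U ⊗[k] U) : (U ⊗[k] U) ⊗[k] U := u ⊗ₜ[k] (1 : U)

/-- `u₂₃ = 1 ⊗ u` in `(U ⊗ U) ⊗ U`. -/
def el23 (u : U ⊗[k] U) : (U ⊗[k] U) ⊗[k] U :=
  (Algebra.TensorProduct.assoc k k k U U U).symm ((1 : U) ⊗ₜ[k] u)

/-- `u₁₃ = σ₂₃ (u₁₂)` in `(U ⊗ U) ⊗ U`. -/
def el13 (u : U ⊗[k] U) : (U ⊗[k] U) ⊗[k] U := σ23 k U (el12 u)

variable (k U)

/-- `Δ ⊗ id : U ⊗ U → (U ⊗ U) ⊗ U`. -/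
def ΔId : (U ⊗[k] U) →ₐ[k] ((U ⊗[k] U) ⊗[k] U) :=
  Algebra.TensorProduct.map (Bialgebra.comulAlgHom k U) (AlgHom.id k U)

/-- `id ⊗ Δ : U ⊗ U → (U ⊗ U) ⊗ U` (transported along the associator). -/
def IdΔ : (U ⊗[k] U) →ₐ[k] ((U ⊗[k] U) ⊗[k] U) :=
  (Algebra.TensorProduct.assoc k k k U U U).symm.toAlgHom.comp
    (Algebra.TensorProduct.map (AlgHom.id k U) (Bialgebra.comulAlgHom k U))

end

/-!
Conjugation by a unit is transported along algebra maps, `Φ ∘ Ad(r) = Ad(Φ r) ∘ Φ`, and the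
leg maps respect composition and send `Ad(u)` to `Ad(u₁₂)`, `Ad(u₂₃)`, `Ad(u₁₃)`. Hence, by (RR2),
`(Δ ⊗ id) ∘ ℛ = Ad((Δ ⊗ id) R⁽¹⁾) ∘ ℛ⁽⁰⁾₁₃ ∘ ℛ⁽⁰⁾₂₃ ∘ (Δ ⊗ id)`, while
`ℛ₁₃ ∘ ℛ₂₃ = Ad(R⁽¹⁾₁₃) ∘ ℛ⁽⁰⁾₁₃ ∘ Ad(R⁽¹⁾₂₃) ∘ ℛ⁽⁰⁾₂₃ = Ad(R⁽¹⁾₁₃ · ℛ⁽⁰⁾₁₃(R⁽¹⁾₂₃)) ∘ ℛ⁽⁰⁾₁₃ ∘ ℛ⁽⁰⁾₂₃`,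
and (RR4) says that the two conjugating units agree. (wq3) follows in the same way from (RR3) and
(RR5), and (wq1) is (RR1).
-/

section Conjugation

variable {k : Type*} [Field k] {A B : Type*} [Ring A] [Algebra k A] [Ring B] [Algebra k B]

theorem adUnit_apply (u : Aˣ) (a : A) : adUnit k u a = ↑u * a * ↑u⁻¹ := rfl

theorem adUnit_mul (u v : Aˣ) (a : A) : adUnit k (u * v) a = adUnit k u (adUnit k v a) := by
  simp only [adUnit_apply, mul_inv_rev, Units.val_mul, mul_assoc]

theorem map_adUnit {F : Type*} [FunLike F A B] [AlgHomClass F k A B] (Φ : F) (u : Aˣ) (a : A) :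
    Φ (adUnit k u a) = adUnit k (Units.map (Φ : A →* B) u) (Φ a) := by
  simp [adUnit_apply]

theorem AlgHom.map_trans_adUnit (Φ : A →ₐ[k] B) {F : A ≃ₐ[k] A} {G : B → B}
    (hΦ : ∀ a, Φ (F a) = G (Φ a)) (r : Aˣ) (a : A) :
    Φ ((F.trans (adUnit k r)) a) = adUnit k (Units.map (Φ : A →* B) r) (G (Φ a)) := by
  rw [AlgEquiv.trans_apply, map_adUnit, hΦ]

theorem Algebra.TensorProduct.congr_adUnit_refl (u : Aˣ) (x : A ⊗[k] B) :
    Algebra.TensorProduct.congr (adUnit k u) (AlgEquiv.refl : B ≃ₐ[k] B) x =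
      adUnit k (Units.map (Algebra.TensorProduct.includeLeft : A →ₐ[k] A ⊗[k] B) u) x := by
  induction x using TensorProduct.induction_on with
  | zero => simp
  | tmul a b => simp [adUnit_apply, Algebra.TensorProduct.tmul_mul_tmul]
  | add x y hx hy => rw [map_add, map_add, hx, hy]

theorem Algebra.TensorProduct.congr_refl_adUnit (u : Bˣ) (x : A ⊗[k] B) :
    Algebra.TensorProduct.congr (AlgEquiv.refl : A ≃ₐ[k] A) (adUnit k u) x =
      adUnit k (Units.map (Algebra.TensorProduct.includeRight : B →ₐ[k] A ⊗[k] B) u) x := by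
  induction x using TensorProduct.induction_on with
  | zero => simp
  | tmul a b => simp [adUnit_apply, Algebra.TensorProduct.tmul_mul_tmul]
  | add x y hx hy => rw [map_add, map_add, hx, hy]

end Conjugation

section Legs

variable {k : Type*} [Field k] {U : Type*} [Ring U] [HopfAlgebra k U]

variable (k U) in
theorem σ23_symm : (σ23 k U).symm = σ23 k U := by
  ext y
  simp [σ23, ← Algebra.TensorProduct.congr_symm, Algebra.TensorProduct.comm_symm]

theorem σ23_σ23 (y : (U ⊗[k] U) ⊗[k] U) : σ23 k U (σ23 k U y) = y := by
  simpa [σ23_symm] using (σ23 k U).symm_apply_apply y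

-- `u ↦ u₁₂`, `u ↦ u₂₃`, `u ↦ u₁₃` as algebra maps; they agree with `el12`, `el23`, `el13`
-- definitionally.
variable (k U) in
def el12Hom : U ⊗[k] U →ₐ[k] (U ⊗[k] U) ⊗[k] U := Algebra.TensorProduct.includeLeft

variable (k U) in
def el23Hom : U ⊗[k] U →ₐ[k] (U ⊗[k] U) ⊗[k] U :=
  (Algebra.TensorProduct.assoc k k k U U U).symm.toAlgHom.comp Algebra.TensorProduct.includeRight

variable (k U) in
def el13Hom : U ⊗[k] U →ₐ[k] (U ⊗[k] U) ⊗[k] U := (σ23 k U).toAlgHom.comp (el12Hom k U)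

theorem leg12_trans (F G : U ⊗[k] U ≃ₐ[k] U ⊗[k] U) (y : (U ⊗[k] U) ⊗[k] U) :
    leg12 (F.trans G) y = leg12 G (leg12 F y) :=
  DFunLike.congr_fun (Algebra.TensorProduct.congr_trans F G AlgEquiv.refl AlgEquiv.refl) y

theorem leg23_trans (F G : U ⊗[k] U ≃ₐ[k] U ⊗[k] U) (y : (U ⊗[k] U) ⊗[k] U) :
    leg23 (F.trans G) y = leg23 G (leg23 F y) := by
  simp only [leg23, AlgEquiv.trans_apply, AlgEquiv.apply_symm_apply]
  exact congrArg _ (DFunLike.congr_fun (Algebra.TensorProduct.congr_trans .refl .refl F G) _)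

theorem leg13_trans (F G : U ⊗[k] U ≃ₐ[k] U ⊗[k] U) (y : (U ⊗[k] U) ⊗[k] U) :
    leg13 (F.trans G) y = leg13 G (leg13 F y) := by
  simp only [leg13, AlgEquiv.trans_apply, leg12_trans, σ23_σ23]

theorem leg12_adUnit (u : (U ⊗[k] U)ˣ) (y : (U ⊗[k] U) ⊗[k] U) :
    leg12 (adUnit k u) y = adUnit k (Units.map (el12Hom k U).toMonoidHom u) y :=
  Algebra.TensorProduct.congr_adUnit_refl u y

theorem leg23_adUnit (u : (U ⊗[k] U)ˣ) (y : (U ⊗[k] U) ⊗[k] U) :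
    leg23 (adUnit k u) y = adUnit k (Units.map (el23Hom k U).toMonoidHom u) y := by
  rw [leg23, AlgEquiv.trans_apply, AlgEquiv.trans_apply,
    Algebra.TensorProduct.congr_refl_adUnit, map_adUnit, AlgEquiv.symm_apply_apply]
  rfl

theorem leg13_adUnit (u : (U ⊗[k] U)ˣ) (y : (U ⊗[k] U) ⊗[k] U) :
    leg13 (adUnit k u) y = adUnit k (Units.map (el13Hom k U).toMonoidHom u) y := by
  rw [leg13, AlgEquiv.trans_apply, AlgEquiv.trans_apply, leg12_adUnit, map_adUnit, σ23_σ23]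
  rfl

theorem leg13_leg23_trans_adUnit (F : U ⊗[k] U ≃ₐ[k] U ⊗[k] U) (u : (U ⊗[k] U)ˣ)
    (y : (U ⊗[k] U) ⊗[k] U) :
    leg13 (F.trans (adUnit k u)) (leg23 (F.trans (adUnit k u)) y) =
      adUnit k (Units.map (el13Hom k U).toMonoidHom u *
          Units.map (leg13 F : _ →* _) (Units.map (el23Hom k U).toMonoidHom u))
        (leg13 F (leg23 F y)) := by
  rw [leg13_trans, leg23_trans, leg23_adUnit, leg13_adUnit, map_adUnit, adUnit_mul]

theorem leg13_leg12_trans_adUnit (F : U ⊗[k] U ≃ₐ[k] U ⊗[k] U) (u : (U ⊗[k] U)ˣ)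
    (y : (U ⊗[k] U) ⊗[k] U) :
    leg13 (F.trans (adUnit k u)) (leg12 (F.trans (adUnit k u)) y) =
      adUnit k (Units.map (el13Hom k U).toMonoidHom u *
          Units.map (leg13 F : _ →* _) (Units.map (el12Hom k U).toMonoidHom u))
        (leg13 F (leg12 F y)) := by
  rw [leg13_trans, leg12_trans, leg12_adUnit, leg13_adUnit, map_adUnit, adUnit_mul]

end Legs

/-- Lemma `lem:weak-quasi`: if `ℛ⁽⁰⁾` is an algebra automorphism of `U ⊗ U` and
`R⁽¹⁾ ∈ U ⊗ U` an invertible element satisfying (RR1)–(RR5), then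
`ℛ = Ad(R⁽¹⁾) ∘ ℛ⁽⁰⁾` makes `U` a weakly quasitriangular Hopf algebra, i.e. it
satisfies (wq1), (wq2) and (wq3). -/
theorem weaklyQuasitriangular_of_RR
    {k : Type*} [Field k] {U : Type*} [Ring U] [HopfAlgebra k U]
    (R0 : (U ⊗[k] U) ≃ₐ[k] (U ⊗[k] U)) (R1 : (U ⊗[k] U)ˣ)
    (RR1 : ∀ u : U, (R1 : U ⊗[k] U) * R0 (Bialgebra.comulAlgHom k U u) * ↑R1⁻¹ = Δop k U u)
    (RR2 : ∀ x : U ⊗[k] U, ΔId k U (R0 x) = leg13 R0 (leg23 R0 (ΔId k U x)))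
    (RR3 : ∀ x : U ⊗[k] U, IdΔ k U (R0 x) = leg13 R0 (leg12 R0 (IdΔ k U x)))
    (RR4 : ΔId k U (R1 : U ⊗[k] U) = el13 (R1 : U ⊗[k] U) * leg13 R0 (el23 (R1 : U ⊗[k] U)))
    (RR5 : IdΔ k U (R1 : U ⊗[k] U) = el13 (R1 : U ⊗[k] U) * leg13 R0 (el12 (R1 : U ⊗[k] U))) :
    (∀ u : U, (R0.trans (adUnit k R1)) (Bialgebra.comulAlgHom k U u) = Δop k U u) ∧
    (∀ x : U ⊗[k] U, ΔId k U ((R0.trans (adUnit k R1)) x) =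
      leg13 (R0.trans (adUnit k R1)) (leg23 (R0.trans (adUnit k R1)) (ΔId k U x))) ∧
    (∀ x : U ⊗[k] U, IdΔ k U ((R0.trans (adUnit k R1)) x) =
      leg13 (R0.trans (adUnit k R1)) (leg12 (R0.trans (adUnit k R1)) (IdΔ k U x))) := by
  refine ⟨RR1, fun x => ?_, fun x => ?_⟩
  · rw [(ΔId k U).map_trans_adUnit (G := leg13 R0 ∘ leg23 R0) RR2,
      leg13_leg23_trans_adUnit]
    -- `RR4` is literally `Units.map (ΔId k U) R1 = R1₁₃ * R0₁₃ (R1₂₃)` as an identity of units.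
    exact congrArg (adUnit k · _) (Units.ext RR4)
  · rw [(IdΔ k U).map_trans_adUnit (G := leg13 R0 ∘ leg12 R0) RR3,
      leg13_leg12_trans_adUnit]
    exact congrArg (adUnit k · _) (Units.ext RR5)
end

section
/- Let (U, ℛ) be a weakly quasitriangular Hopf algebra over a field k and let (B, Δ_B, 𝒦) be a weakly quasitriangular right comodule algebra over (U, ℛ). Then the automorphisms 𝒦 and ℛ satisfy the reflection equation 𝒦₁₂∘ℛ₃₂∘𝒦₁₃∘ℛ₂₃ = ℛ₃₂∘𝒦₁₃∘ℛ₂₃∘𝒦₁₂ as algebra automorphisms of B⊗U⊗U. -/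
open TensorProduct

noncomputable section

variable (k : Type*) [Field k] (U : Type*) [Ring U] [HopfAlgebra k U]
variable (B : Type*) [Ring B] [Algebra k B]

/-- The flip of the two `U`-factors of `(B ⊗ U) ⊗ U`. -/
def τ23 : ((B ⊗[k] U) ⊗[k] U) ≃ₐ[k] ((B ⊗[k] U) ⊗[k] U) :=
  (Algebra.TensorProduct.assoc k k k B U U).trans <|
    (Algebra.TensorProduct.congr AlgEquiv.refl (Algebra.TensorProduct.comm k U U)).trans
      (Algebra.TensorProduct.assoc k k k B U U).symm

variable {k U B}

/-- `G₁₂ = G ⊗ id` on `(B ⊗ U) ⊗ U`. -/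
def legB12 (G : (B ⊗[k] U) ≃ₐ[k] (B ⊗[k] U)) :
    ((B ⊗[k] U) ⊗[k] U) ≃ₐ[k] ((B ⊗[k] U) ⊗[k] U) :=
  Algebra.TensorProduct.congr G AlgEquiv.refl

/-- `G₁₃ = τ₂₃ ∘ G₁₂ ∘ τ₂₃` on `(B ⊗ U) ⊗ U`. -/
def legB13 (G : (B ⊗[k] U) ≃ₐ[k] (B ⊗[k] U)) :
    ((B ⊗[k] U) ⊗[k] U) ≃ₐ[k] ((B ⊗[k] U) ⊗[k] U) :=
  (τ23 k U B).trans ((legB12 G).trans (τ23 k U B))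

/-- `F₂₃ = id_B ⊗ F` on `(B ⊗ U) ⊗ U` (transported along the associator). -/
def legU23 (F : (U ⊗[k] U) ≃ₐ[k] (U ⊗[k] U)) :
    ((B ⊗[k] U) ⊗[k] U) ≃ₐ[k] ((B ⊗[k] U) ⊗[k] U) :=
  (Algebra.TensorProduct.assoc k k k B U U).trans <|
    (Algebra.TensorProduct.congr AlgEquiv.refl F).trans
      (Algebra.TensorProduct.assoc k k k B U U).symm

/-- `F₃₂ = τ₂₃ ∘ F₂₃ ∘ τ₂₃` on `(B ⊗ U) ⊗ U`. -/
def legU32 (F : (U ⊗[k] U) ≃ₐ[k] (U ⊗[k] U)) :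
    ((B ⊗[k] U) ⊗[k] U) ≃ₐ[k] ((B ⊗[k] U) ⊗[k] U) :=
  (τ23 k U B).trans ((legU23 F).trans (τ23 k U B))

/-- `v₁₂ = v ⊗ 1` in `(B ⊗ U) ⊗ U`. -/
def elB12 (v : B ⊗[k] U) : (B ⊗[k] U) ⊗[k] U := v ⊗ₜ[k] (1 : U)

/-- `v₁₃ = τ₂₃ (v₁₂)` in `(B ⊗ U) ⊗ U`. -/
def elB13 (v : B ⊗[k] U) : (B ⊗[k] U) ⊗[k] U := τ23 k U B (elB12 v)

/-- `u₂₃ = 1_B ⊗ u` in `(B ⊗ U) ⊗ U`. -/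
def elU23 (u : U ⊗[k] U) : (B ⊗[k] U) ⊗[k] U :=
  (Algebra.TensorProduct.assoc k k k B U U).symm ((1 : B) ⊗ₜ[k] u)

/-- `u₃₂ = τ₂₃ (u₂₃)` in `(B ⊗ U) ⊗ U`. -/
def elU32 (u : U ⊗[k] U) : (B ⊗[k] U) ⊗[k] U := τ23 k U B (elU23 u)

/-- `Δ_B ⊗ id : B ⊗ U → (B ⊗ U) ⊗ U`. -/
def ΔBId (ΔB : B →ₐ[k] B ⊗[k] U) : (B ⊗[k] U) →ₐ[k] ((B ⊗[k] U) ⊗[k] U) :=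
  Algebra.TensorProduct.map ΔB (AlgHom.id k U)

variable (k U B) in
/-- `id_B ⊗ Δ : B ⊗ U → (B ⊗ U) ⊗ U` (transported along the associator). -/
def IdBΔ : (B ⊗[k] U) →ₐ[k] ((B ⊗[k] U) ⊗[k] U) :=
  (Algebra.TensorProduct.assoc k k k B U U).symm.toAlgHom.comp
    (Algebra.TensorProduct.map (AlgHom.id k B) (Bialgebra.comulAlgHom k U))

/-- `B` together with `Δ_B : B →ₐ B ⊗ U` is a right `U`-comodule algebra:
`Δ_B` is coassociative and counital. -/
def IsComoduleAlgebra (ΔB : B →ₐ[k] B ⊗[k] U) : Prop :=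
  (∀ b : B, ΔBId ΔB (ΔB b) = IdBΔ k U B (ΔB b)) ∧
  (∀ b : B, Algebra.TensorProduct.rid k k B
      (Algebra.TensorProduct.map (AlgHom.id k B) (Bialgebra.counitAlgHom k U) (ΔB b)) = b)

end


/-! Both sides of the reflection equation are algebra maps, so it suffices to compare them on
generators of `(B ⊗ U) ⊗ U`. On the image of `Δ_B ⊗ id`, `𝒦₁₂` acts trivially by (K1) and both
sides reduce to (K2). On the image of `id ⊗ Δ`, where (wq1) says that `ℛ₂₃` agrees with the flip
`τ₂₃`, conjugating by `τ₂₃` and using (K3) shows that `ℛ₂₃` identifies both sides. These two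
images generate, because the Hopf identity `u₍₁₎ ⊗ u₍₂₎ S(u₍₃₎) = u ⊗ 1` shows that `Δ(U)` and
`1 ⊗ U` generate `U ⊗ U`. -/

namespace HopfAlgebra

open Coalgebra Bialgebra Algebra.TensorProduct

variable {R A : Type*} [CommSemiring R] [Semiring A] [HopfAlgebra R A]

def comulMulAntipode : A ⊗[R] A →ₗ[R] A ⊗[R] A :=
  LinearMap.mul' R (A ⊗[R] A) ∘ₗ
    TensorProduct.map (comulAlgHom R A).toLinearMap (includeRight.toLinearMap ∘ₗ antipode R)

theorem comulMulAntipode_tmul (x y : A) :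
    comulMulAntipode (x ⊗ₜ[R] y) = comulAlgHom R A x * (1 ⊗ₜ antipode R y) := rfl

theorem comulMulAntipode_eq :
    comulMulAntipode (R := R) (A := A) =
      (LinearMap.mul' R A ∘ₗ (antipode R).lTensor A).lTensor A ∘ₗ
        (TensorProduct.assoc R A A A).toLinearMap ∘ₗ (comul (R := R)).rTensor A := by
  refine TensorProduct.ext' fun x y => ?_
  simp only [comulMulAntipode_tmul, comulAlgHom_apply, LinearMap.comp_apply,
    LinearMap.rTensor_tmul, LinearEquiv.coe_coe]
  induction comul (R := R) x using TensorProduct.induction_on with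
  | zero => simp
  | add z w hz hw => simp only [add_mul, hz, hw, map_add, TensorProduct.add_tmul]
  | tmul a b => simp

theorem comulMulAntipode_comul (a : A) :
    comulMulAntipode (comul (R := R) a) = a ⊗ₜ 1 := by
  simp only [comulMulAntipode_eq, LinearMap.comp_apply, LinearEquiv.coe_coe, coassoc_apply]
  rw [← LinearMap.comp_apply, ← LinearMap.lTensor_comp, LinearMap.comp_assoc,
    mul_antipode_lTensor_comul, LinearMap.lTensor_comp, LinearMap.comp_apply,
    lTensor_counit_comul, LinearMap.lTensor_tmul, Algebra.linearMap_apply, map_one]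

theorem adjoin_range_comulAlgHom_union_range_includeRight :
    Algebra.adjoin R (Set.range (comulAlgHom R A) ∪ Set.range includeRight) = ⊤ := by
  set S := Algebra.adjoin R (Set.range (comulAlgHom R A) ∪ Set.range includeRight)
  have hN : ∀ z, comulMulAntipode z ∈ S := fun z => by
    induction z using TensorProduct.induction_on with
    | zero => simp
    | add z w hz hw => rw [map_add]; exact add_mem hz hw
    | tmul x y =>
      exact mul_mem (Algebra.subset_adjoin (.inl ⟨x, rfl⟩))
        (Algebra.subset_adjoin (.inr ⟨antipode R y, rfl⟩))
  rw [eq_top_iff]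
  rintro z -
  induction z using TensorProduct.induction_on with
  | zero => exact zero_mem S
  | add z w hz hw => exact add_mem hz hw
  | tmul x y =>
    have hx : x ⊗ₜ[R] (1 : A) ∈ S := comulMulAntipode_comul (R := R) x ▸ hN _
    simpa using mul_mem hx (Algebra.subset_adjoin (.inr ⟨y, rfl⟩) : (1 : A) ⊗ₜ[R] y ∈ S)

end HopfAlgebra

section ReflectionEquation

open Algebra.TensorProduct

variable {k : Type*} [Field k] {U : Type*} [Ring U] [HopfAlgebra k U]
variable {B : Type*} [Ring B] [Algebra k B]

@[simp]
theorem τ23_tmul (b : B) (u v : U) : τ23 k U B ((b ⊗ₜ u) ⊗ₜ v) = (b ⊗ₜ v) ⊗ₜ u := rfl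

@[simp]
theorem τ23_τ23 (t : (B ⊗[k] U) ⊗[k] U) : τ23 k U B (τ23 k U B t) = t := by
  induction t using TensorProduct.induction_on with
  | zero => simp
  | add x y hx hy => rw [map_add, map_add, hx, hy]
  | tmul x v =>
    induction x using TensorProduct.induction_on with
    | zero => simp
    | add x y hx hy => rw [TensorProduct.add_tmul, map_add, map_add, hx, hy]
    | tmul b u => simp

theorem τ23_legU32 (F : (U ⊗[k] U) ≃ₐ[k] (U ⊗[k] U)) (t : (B ⊗[k] U) ⊗[k] U) :
    τ23 k U B (legU32 F t) = legU23 F (τ23 k U B t) :=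
  τ23_τ23 _

theorem τ23_legU23 (F : (U ⊗[k] U) ≃ₐ[k] (U ⊗[k] U)) (t : (B ⊗[k] U) ⊗[k] U) :
    τ23 k U B (legU23 F t) = legU32 F (τ23 k U B t) := by
  simp [legU32, AlgEquiv.trans_apply]

theorem τ23_legB13 (G : (B ⊗[k] U) ≃ₐ[k] (B ⊗[k] U)) (t : (B ⊗[k] U) ⊗[k] U) :
    τ23 k U B (legB13 G t) = legB12 G (τ23 k U B t) :=
  τ23_τ23 _

theorem τ23_legB12 (G : (B ⊗[k] U) ≃ₐ[k] (B ⊗[k] U)) (t : (B ⊗[k] U) ⊗[k] U) :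
    τ23 k U B (legB12 G t) = legB13 G (τ23 k U B t) := by
  simp [legB13, AlgEquiv.trans_apply]

theorem IdBΔ_tmul (b : B) (u : U) :
    IdBΔ k U B (b ⊗ₜ u) =
      (Algebra.TensorProduct.assoc k k k B U U).symm (b ⊗ₜ Bialgebra.comulAlgHom k U u) :=
  rfl

theorem τ23_assoc_symm_tmul (b : B) (z : U ⊗[k] U) :
    τ23 k U B ((Algebra.TensorProduct.assoc k k k B U U).symm (b ⊗ₜ z)) =
      (Algebra.TensorProduct.assoc k k k B U U).symm (b ⊗ₜ Algebra.TensorProduct.comm k U U z) := by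
  simp [τ23, AlgEquiv.trans_apply, congr_apply]

theorem legU23_assoc_symm_tmul (F : (U ⊗[k] U) ≃ₐ[k] (U ⊗[k] U)) (b : B) (z : U ⊗[k] U) :
    legU23 F ((Algebra.TensorProduct.assoc k k k B U U).symm (b ⊗ₜ z)) =
      (Algebra.TensorProduct.assoc k k k B U U).symm (b ⊗ₜ F z) := by
  simp [legU23, AlgEquiv.trans_apply, congr_apply]

theorem τ23_IdBΔ {ℛ : (U ⊗[k] U) ≃ₐ[k] (U ⊗[k] U)}
    (wq1 : ∀ u : U, ℛ (Bialgebra.comulAlgHom k U u) = Δop k U u) (x : B ⊗[k] U) :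
    τ23 k U B (IdBΔ k U B x) = legU23 ℛ (IdBΔ k U B x) := by
  induction x using TensorProduct.induction_on with
  | zero => simp
  | add x y hx hy => rw [map_add, map_add, map_add, hx, hy]
  | tmul b u => rw [IdBΔ_tmul, τ23_assoc_symm_tmul, legU23_assoc_symm_tmul, wq1]; rfl

theorem legB12_ΔBId {ΔB : B →ₐ[k] B ⊗[k] U} {𝒦 : (B ⊗[k] U) ≃ₐ[k] (B ⊗[k] U)}
    (K1 : ∀ b : B, 𝒦 (ΔB b) = ΔB b) (z : B ⊗[k] U) :
    legB12 𝒦 (ΔBId ΔB z) = ΔBId ΔB z := by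
  induction z using TensorProduct.induction_on with
  | zero => simp
  | add x y hx hy => rw [map_add, map_add, hx, hy]
  | tmul b u => exact congrArg (· ⊗ₜ[k] u) (K1 b)

theorem adjoin_range_IdBΔ_union_range_ΔBId (ΔB : B →ₐ[k] B ⊗[k] U) :
    Algebra.adjoin k (Set.range (IdBΔ k U B) ∪ Set.range (ΔBId ΔB)) = ⊤ := by
  set S := Algebra.adjoin k (Set.range (IdBΔ k U B) ∪ Set.range (ΔBId ΔB))
  let ι : U ⊗[k] U →ₐ[k] (B ⊗[k] U) ⊗[k] U :=
    (Algebra.TensorProduct.assoc k k k B U U).symm.toAlgHom.comp includeRight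
  have hι : ∀ z, ι z ∈ S := fun z => by
    suffices ι.range ≤ S from this ⟨z, rfl⟩
    rw [← Algebra.map_top, ← HopfAlgebra.adjoin_range_comulAlgHom_union_range_includeRight,
      AlgHom.map_adjoin]
    refine Algebra.adjoin_le ?_
    rintro _ ⟨_, ⟨u, rfl⟩ | ⟨v, rfl⟩, rfl⟩
    · exact Algebra.subset_adjoin (.inl ⟨1 ⊗ₜ u, rfl⟩)
    · exact Algebra.subset_adjoin (.inr ⟨1 ⊗ₜ v, by simp [ι, ΔBId, one_def]⟩)
  rw [eq_top_iff]
  rintro t -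
  rw [← (Algebra.TensorProduct.assoc k k k B U U).symm_apply_apply t]
  induction Algebra.TensorProduct.assoc k k k B U U t using TensorProduct.induction_on with
  | zero => simp
  | add x y hx hy => rw [map_add]; exact add_mem hx hy
  | tmul b z =>
    have hb : (Algebra.TensorProduct.assoc k k k B U U).symm (b ⊗ₜ 1) = IdBΔ k U B (b ⊗ₜ 1) := by
      simp [IdBΔ_tmul]
    rw [← mul_one b, ← one_mul z, ← tmul_mul_tmul, map_mul, hb]
    exact mul_mem (Algebra.subset_adjoin (.inl ⟨_, rfl⟩)) (hι z)

variable {ℛ : (U ⊗[k] U) ≃ₐ[k] (U ⊗[k] U)} {𝒦 : (B ⊗[k] U) ≃ₐ[k] (B ⊗[k] U)}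

theorem reflection_apply_ΔBId {ΔB : B →ₐ[k] B ⊗[k] U} (K1 : ∀ b : B, 𝒦 (ΔB b) = ΔB b)
    (K2 : ∀ x : B ⊗[k] U, ΔBId ΔB (𝒦 x) = legU32 ℛ (legB13 𝒦 (legU23 ℛ (ΔBId ΔB x))))
    (z : B ⊗[k] U) :
    legB12 𝒦 (legU32 ℛ (legB13 𝒦 (legU23 ℛ (ΔBId ΔB z)))) =
      legU32 ℛ (legB13 𝒦 (legU23 ℛ (legB12 𝒦 (ΔBId ΔB z)))) := by
  rw [legB12_ΔBId K1, ← K2, legB12_ΔBId K1]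

theorem reflection_apply_IdBΔ (wq1 : ∀ u : U, ℛ (Bialgebra.comulAlgHom k U u) = Δop k U u)
    (K3 : ∀ x : B ⊗[k] U, IdBΔ k U B (𝒦 x) =
      legU32 ℛ (legB13 𝒦 (legU23 ℛ (legB12 𝒦 (IdBΔ k U B x)))))
    (z : B ⊗[k] U) :
    legB12 𝒦 (legU32 ℛ (legB13 𝒦 (legU23 ℛ (IdBΔ k U B z)))) =
      legU32 ℛ (legB13 𝒦 (legU23 ℛ (legB12 𝒦 (IdBΔ k U B z)))) := by
  apply (legU23 ℛ).injective
  calc legU23 ℛ (legB12 𝒦 (legU32 ℛ (legB13 𝒦 (legU23 ℛ (IdBΔ k U B z)))))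
      = τ23 k U B (legU32 ℛ (legB13 𝒦 (legU23 ℛ (legB12 𝒦 (IdBΔ k U B z))))) := by
        rw [τ23_legU32, τ23_legB13, τ23_legU23, τ23_legB12, τ23_IdBΔ wq1]
    _ = τ23 k U B (IdBΔ k U B (𝒦 z)) := by rw [K3]
    _ = legU23 ℛ (legU32 ℛ (legB13 𝒦 (legU23 ℛ (legB12 𝒦 (IdBΔ k U B z))))) := by
        rw [τ23_IdBΔ wq1, K3]

end ReflectionEquation

theorem weaklyQuasitriangular_comodule_reflection_general
    {k : Type*} [Field k] {U : Type*} [Ring U] [HopfAlgebra k U]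
    {B : Type*} [Ring B] [Algebra k B]
    (ℛ : (U ⊗[k] U) ≃ₐ[k] (U ⊗[k] U))
    (wq1 : ∀ u : U, ℛ (Bialgebra.comulAlgHom k U u) = Δop k U u)
    (ΔB : B →ₐ[k] B ⊗[k] U)
    (𝒦 : (B ⊗[k] U) ≃ₐ[k] (B ⊗[k] U))
    (K1 : ∀ b : B, 𝒦 (ΔB b) = ΔB b)
    (K2 : ∀ x : B ⊗[k] U, ΔBId ΔB (𝒦 x) = legU32 ℛ (legB13 𝒦 (legU23 ℛ (ΔBId ΔB x))))
    (K3 : ∀ x : B ⊗[k] U, IdBΔ k U B (𝒦 x) =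
      legU32 ℛ (legB13 𝒦 (legU23 ℛ (legB12 𝒦 (IdBΔ k U B x))))) :
    ∀ y : (B ⊗[k] U) ⊗[k] U,
      legB12 𝒦 (legU32 ℛ (legB13 𝒦 (legU23 ℛ y))) =
        legU32 ℛ (legB13 𝒦 (legU23 ℛ (legB12 𝒦 y))) := by
  let lhs := (legU23 ℛ).trans ((legB13 𝒦).trans ((legU32 ℛ).trans (legB12 𝒦)))
  let rhs := (legB12 𝒦).trans ((legU23 ℛ).trans ((legB13 𝒦).trans (legU32 ℛ)))
  have h : lhs.toAlgHom = rhs.toAlgHom := by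
    refine AlgHom.ext_of_adjoin_eq_top (adjoin_range_IdBΔ_union_range_ΔBId ΔB) ?_
    rintro _ (⟨z, rfl⟩ | ⟨z, rfl⟩) <;>
      simp only [AlgEquiv.toAlgHom_apply, AlgEquiv.trans_apply, lhs, rhs]
    exacts [reflection_apply_IdBΔ wq1 K3 z, reflection_apply_ΔBId K1 K2 z]
  intro y
  simpa only [AlgEquiv.toAlgHom_apply, AlgEquiv.trans_apply, lhs, rhs] using
    DFunLike.congr_fun h y

/-- If `(U, ℛ)` is a weakly quasitriangular Hopf algebra and `(B, Δ_B, 𝒦)` a weakly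
quasitriangular right comodule algebra over `(U, ℛ)`, then `𝒦` and `ℛ` satisfy the
reflection equation `𝒦₁₂ ∘ ℛ₃₂ ∘ 𝒦₁₃ ∘ ℛ₂₃ = ℛ₃₂ ∘ 𝒦₁₃ ∘ ℛ₂₃ ∘ 𝒦₁₂`
as algebra automorphisms of `B ⊗ U ⊗ U`. -/
theorem weaklyQuasitriangular_comodule_reflection
    {k : Type*} [Field k] {U : Type*} [Ring U] [HopfAlgebra k U]
    {B : Type*} [Ring B] [Algebra k B]
    (ℛ : (U ⊗[k] U) ≃ₐ[k] (U ⊗[k] U))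
    (wq1 : ∀ u : U, ℛ (Bialgebra.comulAlgHom k U u) = Δop k U u)
    (wq2 : ∀ x : U ⊗[k] U, ΔId k U (ℛ x) = leg13 ℛ (leg23 ℛ (ΔId k U x)))
    (wq3 : ∀ x : U ⊗[k] U, IdΔ k U (ℛ x) = leg13 ℛ (leg12 ℛ (IdΔ k U x)))
    (ΔB : B →ₐ[k] B ⊗[k] U) (hB : IsComoduleAlgebra ΔB)
    (𝒦 : (B ⊗[k] U) ≃ₐ[k] (B ⊗[k] U))
    (K1 : ∀ b : B, 𝒦 (ΔB b) = ΔB b)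
    (K2 : ∀ x : B ⊗[k] U, ΔBId ΔB (𝒦 x) = legU32 ℛ (legB13 𝒦 (legU23 ℛ (ΔBId ΔB x))))
    (K3 : ∀ x : B ⊗[k] U, IdBΔ k U B (𝒦 x) =
      legU32 ℛ (legB13 𝒦 (legU23 ℛ (legB12 𝒦 (IdBΔ k U B x))))) :
    ∀ y : (B ⊗[k] U) ⊗[k] U,
      legB12 𝒦 (legU32 ℛ (legB13 𝒦 (legU23 ℛ y))) =
        legU32 ℛ (legB13 𝒦 (legU23 ℛ (legB12 𝒦 y))) :=
  weaklyQuasitriangular_comodule_reflection_general ℛ wq1 ΔB 𝒦 K1 K2 K3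
end

section
/- Let R be a commutative ring and let q and t₁ be units in R. Set t = (q−1)t₁(t₁+1) and define polynomials p_n ∈ R[x] recursively by p₀ = 1 and p_n = x·p_{n−1} + t q^{−2n} D_q(p_{n−1}) + q^{−n} p_{n−1} for n ≥ 1. Then for all n ∈ ℕ, p_n = t₁ⁿ q^{−n²} U_n^{(−t₁⁻¹−1)}(qⁿ t₁⁻¹ x; q), where the right-hand side is the polynomial obtained from the Al-Salam–Carlitz I polynomial U_n^{(a)}(X;q) with a = −t₁⁻¹−1 by substituting X = qⁿ t₁⁻¹ x. -/
noncomputable section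

variable {R : Type*} [CommRing R]

/-- The Gaussian binomial coefficient `binom(n,k)_q`, defined by `binom(n,0)_q = 1`,
`binom(0,k+1)_q = 0` and the `q`-Pascal recursion
`binom(n+1,k+1)_q = binom(n,k)_q + q^(k+1)·binom(n,k+1)_q`. -/
def qbinom (q : R) : ℕ → ℕ → R
  | _, 0 => 1
  | 0, _ + 1 => 0
  | n + 1, k + 1 => qbinom q n k + q ^ (k + 1) * qbinom q n (k + 1)

/-- The Al-Salam–Carlitz I polynomial
`U_n^{(a)}(X;q) = Σ_{k=0}^{n} binom(n,k)_q (−a)^k q^{k(k−1)/2} ∏_{j=0}^{n−k−1}(X − q^j)`. -/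
def alSalamCarlitz (q a : R) (n : ℕ) : Polynomial R :=
  ∑ k ∈ Finset.range (n + 1),
    Polynomial.C (qbinom q n k * (-a) ^ k * q ^ (k * (k - 1) / 2)) *
      ∏ j ∈ Finset.range (n - k), (Polynomial.X - Polynomial.C (q ^ j))

/-- The `q`-derivative `D_q` on `R[x]`, determined by `D_q(xⁿ) = [n]_q x^(n−1)`. -/
def qDeriv (q : R) (p : Polynomial R) : Polynomial R :=
  p.sum fun n c => Polynomial.C (c * ∑ i ∈ Finset.range n, q ^ i) * Polynomial.X ^ (n - 1)

/-- The recursively defined polynomials `p₀ = 1`,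
`p_n = x·p_{n−1} + t q^{−2n} D_q(p_{n−1}) + q^{−n} p_{n−1}` with
`t = (q−1)t₁(t₁+1)`. -/
def pseq (q t₁ : Rˣ) : ℕ → Polynomial R
  | 0 => 1
  | n + 1 =>
      Polynomial.X * pseq q t₁ n +
        Polynomial.C (((q : R) - 1) * (t₁ : R) * ((t₁ : R) + 1) *
            ((q⁻¹ : Rˣ) : R) ^ (2 * (n + 1))) * qDeriv (q : R) (pseq q t₁ n) +
        Polynomial.C (((q⁻¹ : Rˣ) : R) ^ (n + 1)) * pseq q t₁ n

end

/-!
Expand `U_n` in the basis `P_m = ∏_{j<m} (X - q^j)`, which is adapted to both operations in the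
recursion: `P_{m+1}(qX) = q^m (qX - 1) P_m` and `D_q P_{m+1} = [m+1]_q P_m`. Together with the
`q`-Pascal rule for the coefficients this gives
`q U_{n+1}(qX) = q^{n+1} (qX - 1 - a) U_n - a (q - 1) qⁿ D_q U_n`,
and rescaling `X ↦ qⁿ t₁⁻¹ X` turns it into the recursion defining `p_n`.
-/

open Polynomial Finset

section QDeriv

variable {R : Type*} [CommRing R] (q : R)

noncomputable def qDerivₗ : R[X] →ₗ[R] R[X] :=
  lsum fun n => LinearMap.toSpanSingleton R R[X] (C (∑ i ∈ range n, q ^ i) * X ^ (n - 1))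

theorem qDerivₗ_apply (p : R[X]) : qDerivₗ q p = qDeriv q p := by
  simp only [qDerivₗ, lsum_apply, LinearMap.toSpanSingleton_apply, qDeriv, smul_eq_C_mul,
    C_mul, mul_assoc]

theorem qDeriv_add (p r : R[X]) : qDeriv q (p + r) = qDeriv q p + qDeriv q r := by
  simp only [← qDerivₗ_apply, map_add]

theorem qDeriv_C_mul (a : R) (p : R[X]) : qDeriv q (C a * p) = C a * qDeriv q p := by
  simp only [← qDerivₗ_apply, ← smul_eq_C_mul, map_smul]

theorem qDeriv_sum {ι : Type*} (s : Finset ι) (f : ι → R[X]) :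
    qDeriv q (∑ i ∈ s, f i) = ∑ i ∈ s, qDeriv q (f i) := by
  simp only [← qDerivₗ_apply, map_sum]

theorem qDeriv_C_mul_X_pow (a : R) (n : ℕ) :
    qDeriv q (C a * X ^ n) = C (a * ∑ i ∈ range n, q ^ i) * X ^ (n - 1) := by
  rw [C_mul_X_pow_eq_monomial, qDeriv, sum_monomial_index]
  simp

theorem qDeriv_C (a : R) : qDeriv q (C a) = 0 := by
  simpa using qDeriv_C_mul_X_pow q a 0

theorem qDeriv_one : qDeriv q (1 : R[X]) = 0 := by
  simpa using qDeriv_C q 1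

theorem qDeriv_X : qDeriv q (X : R[X]) = 1 := by
  simpa using qDeriv_C_mul_X_pow q 1 1

theorem qDeriv_mul (p r : R[X]) :
    qDeriv q (p * r) = p.comp (C q * X) * qDeriv q r + qDeriv q p * r := by
  induction p using Polynomial.induction_on' with
  | add f g hf hg => rw [add_mul, qDeriv_add, hf, hg, add_comp, qDeriv_add]; ring
  | monomial n a =>
    induction r using Polynomial.induction_on' with
    | add f g hf hg => rw [mul_add, qDeriv_add, hf, hg, qDeriv_add]; ring
    | monomial m b =>
      simp only [← C_mul_X_pow_eq_monomial, C_mul_comp, X_pow_comp, qDeriv_C_mul_X_pow,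
        mul_pow, ← C_pow]
      rw [show C a * X ^ n * (C b * X ^ m) = C (a * b) * X ^ (n + m) by simp; ring,
        qDeriv_C_mul_X_pow, sum_range_add]
      simp only [pow_add, ← mul_sum]
      rcases n with _ | n
      · simp; ring
      rcases m with _ | m
      · simp; ring
      rw [show n + 1 + (m + 1) - 1 = n + 1 + m by omega]
      simp only [add_tsub_cancel_right, C_mul, C_add, C_pow]
      ring

theorem qDeriv_comp_C_mul_X (c : R) (p : R[X]) :
    qDeriv q (p.comp (C c * X)) = C c * (qDeriv q p).comp (C c * X) := by
  induction p using Polynomial.induction_on' with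
  | add f g hf hg => simp only [add_comp, qDeriv_add, hf, hg, mul_add]
  | monomial n a =>
    rcases n with _ | n
    · simp [qDeriv_C]
    simp only [← C_mul_X_pow_eq_monomial, C_mul_comp, X_pow_comp, mul_pow, ← C_pow,
      ← mul_assoc, ← C_mul, qDeriv_C_mul_X_pow, add_tsub_cancel_right, C_mul_comp]
    simp only [C_mul, C_pow]
    ring

end QDeriv

section AlSalamCarlitz

variable {R : Type*} [CommRing R] (q : R)

noncomputable def qDescPochhammer (m : ℕ) : R[X] :=
  ∏ j ∈ range m, (X - C (q ^ j))

@[simp]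
theorem qDescPochhammer_zero : qDescPochhammer q 0 = 1 := prod_range_zero _

theorem qDescPochhammer_succ (m : ℕ) :
    qDescPochhammer q (m + 1) = qDescPochhammer q m * (X - C (q ^ m)) :=
  prod_range_succ _ m

theorem qDescPochhammer_succ_comp (m : ℕ) :
    (qDescPochhammer q (m + 1)).comp (C q * X) =
      C (q ^ m) * (C q * X - 1) * qDescPochhammer q m := by
  have hfactor :
      ∀ j ∈ range m, (X - C (q ^ (j + 1))).comp (C q * X) = C q * (X - C (q ^ j)) := by
    intro j _
    rw [sub_comp, X_comp, C_comp, pow_succ', C_mul, mul_sub]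
  rw [qDescPochhammer, prod_range_succ', mul_comp, Polynomial.prod_comp, prod_congr rfl hfactor,
    prod_mul_distrib, prod_const, card_range, qDescPochhammer]
  simp only [pow_zero, C_1, sub_comp, X_comp, one_comp, C_pow]
  ring

theorem qDeriv_qDescPochhammer_succ (m : ℕ) :
    qDeriv q (qDescPochhammer q (m + 1)) =
      C (∑ i ∈ range (m + 1), q ^ i) * qDescPochhammer q m := by
  have qDeriv_X_sub_C (a : R) : qDeriv q (X - C a) = 1 := by
    rw [sub_eq_add_neg, ← C_neg, qDeriv_add, qDeriv_X, qDeriv_C, add_zero]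
  induction m with
  | zero => rw [qDescPochhammer_succ, qDescPochhammer_zero, one_mul, qDeriv_X_sub_C]; simp
  | succ m ih =>
    have hgeom := geom_sum_mul (C q) (m + 1)
    rw [qDescPochhammer_succ, qDeriv_mul, qDeriv_X_sub_C, ih, qDescPochhammer_succ_comp,
      qDescPochhammer_succ, sum_range_succ _ (m + 1)]
    simp only [C_add, C_pow, map_sum]
    linear_combination (-(C q ^ m * qDescPochhammer q m)) * hgeom

theorem C_mul_qDescPochhammer_comp (m : ℕ) :
    C q * (qDescPochhammer q m).comp (C q * X) =
      C (q ^ (m + 1)) * qDescPochhammer q m +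
        C ((q - 1) * q ^ m) * qDeriv q (qDescPochhammer q m) := by
  rcases m with _ | m
  · simp [qDeriv_one]
  have hgeom := geom_sum_mul (C q) (m + 1)
  rw [qDescPochhammer_succ_comp, qDeriv_qDescPochhammer_succ, qDescPochhammer_succ]
  simp only [C_mul, C_sub, C_pow, C_1, map_sum]
  linear_combination (-(C q ^ (m + 1) * qDescPochhammer q m)) * hgeom

theorem sum_qDescPochhammer_succ_sub_comp (f : ℕ → R) (n : ℕ) :
    (∑ k ∈ range (n + 1), C (q ^ k * f k) * qDescPochhammer q (n + 1 - k)).comp (C q * X) =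
      C (q ^ n) * (C q * X - 1) * ∑ k ∈ range (n + 1), C (f k) * qDescPochhammer q (n - k) := by
  rw [Polynomial.sum_comp, mul_sum]
  refine sum_congr rfl fun k hk => ?_
  have hk : k ≤ n := Nat.lt_succ_iff.mp (mem_range.mp hk)
  rw [mul_comp, C_comp, Nat.sub_add_comm hk, qDescPochhammer_succ_comp, ← pow_mul_pow_sub q hk]
  simp only [C_mul, C_pow]
  ring

theorem C_mul_sum_qDescPochhammer_sub_comp (f : ℕ → R) (n : ℕ) :
    C q * (∑ k ∈ range (n + 1), C (q ^ k * f k) * qDescPochhammer q (n - k)).comp (C q * X) =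
      C (q ^ (n + 1)) * ∑ k ∈ range (n + 1), C (f k) * qDescPochhammer q (n - k) +
        C ((q - 1) * q ^ n) *
          qDeriv q (∑ k ∈ range (n + 1), C (f k) * qDescPochhammer q (n - k)) := by
  rw [Polynomial.sum_comp, qDeriv_sum, mul_sum, mul_sum, mul_sum, ← sum_add_distrib]
  refine sum_congr rfl fun k hk => ?_
  have hk : k ≤ n := Nat.lt_succ_iff.mp (mem_range.mp hk)
  rw [mul_comp, C_comp, mul_left_comm, C_mul_qDescPochhammer_comp, qDeriv_C_mul, pow_succ q n,
    ← pow_mul_pow_sub q hk]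
  simp only [C_mul, C_pow, pow_succ]
  ring

theorem qbinom_zero_right (n : ℕ) : qbinom q n 0 = 1 := by
  cases n <;> rfl

theorem qbinom_eq_zero_of_lt : ∀ {n k : ℕ}, n < k → qbinom q n k = 0
  | 0, _ + 1, _ => rfl
  | n + 1, k + 1, h => by
    rw [qbinom, qbinom_eq_zero_of_lt (by omega), qbinom_eq_zero_of_lt (by omega), mul_zero,
      add_zero]

variable (a : R)

noncomputable def alSalamCarlitzCoeff (n k : ℕ) : R :=
  qbinom q n k * (-a) ^ k * q ^ (k * (k - 1) / 2)

theorem alSalamCarlitz_eq_sum (n : ℕ) :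
    alSalamCarlitz q a n =
      ∑ k ∈ range (n + 1), C (alSalamCarlitzCoeff q a n k) * qDescPochhammer q (n - k) :=
  rfl

theorem alSalamCarlitzCoeff_zero_right (n : ℕ) : alSalamCarlitzCoeff q a n 0 = 1 := by
  simp [alSalamCarlitzCoeff, qbinom_zero_right]

theorem alSalamCarlitzCoeff_succ_right_self (n : ℕ) : alSalamCarlitzCoeff q a n (n + 1) = 0 := by
  simp [alSalamCarlitzCoeff, qbinom_eq_zero_of_lt q (Nat.lt_succ_self n)]

theorem alSalamCarlitzCoeff_succ_succ (n k : ℕ) :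
    alSalamCarlitzCoeff q a (n + 1) (k + 1) =
      -a * q ^ k * alSalamCarlitzCoeff q a n k +
        q ^ (k + 1) * alSalamCarlitzCoeff q a n (k + 1) := by
  simp only [alSalamCarlitzCoeff, qbinom, Nat.triangle_succ, pow_add, pow_succ]
  ring

theorem alSalamCarlitz_succ (n : ℕ) :
    alSalamCarlitz q a (n + 1) =
      ∑ k ∈ range (n + 1),
          C (q ^ k * alSalamCarlitzCoeff q a n k) * qDescPochhammer q (n + 1 - k) -
        C a * ∑ k ∈ range (n + 1),
          C (q ^ k * alSalamCarlitzCoeff q a n k) * qDescPochhammer q (n - k) := by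
  have hshift :
      ∑ k ∈ range (n + 1),
          C (q ^ k * alSalamCarlitzCoeff q a n k) * qDescPochhammer q (n + 1 - k) =
        ∑ k ∈ range (n + 1),
          C (q ^ (k + 1) * alSalamCarlitzCoeff q a n (k + 1)) * qDescPochhammer q (n - k) +
        qDescPochhammer q (n + 1) := by
    rw [sum_range_succ', sum_range_succ _ n, alSalamCarlitzCoeff_succ_right_self]
    simp [alSalamCarlitzCoeff_zero_right]
  rw [hshift, alSalamCarlitz_eq_sum, sum_range_succ', mul_sum]
  simp only [alSalamCarlitzCoeff_succ_succ, alSalamCarlitzCoeff_zero_right, C_add, add_mul,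
    sum_add_distrib, Nat.add_sub_add_right, C_1, one_mul, Nat.sub_zero, C_mul, C_neg, neg_mul,
    sum_neg_distrib, mul_assoc]
  ring

theorem C_mul_alSalamCarlitz_succ_comp (n : ℕ) :
    C q * (alSalamCarlitz q a (n + 1)).comp (C q * X) =
      C (q ^ (n + 1)) * (C q * X - C (1 + a)) * alSalamCarlitz q a n -
        C (a * (q - 1) * q ^ n) * qDeriv q (alSalamCarlitz q a n) := by
  rw [alSalamCarlitz_succ, sub_comp, mul_comp, C_comp, mul_sub, mul_left_comm _ (C a),
    sum_qDescPochhammer_succ_sub_comp, C_mul_sum_qDescPochhammer_sub_comp,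
    ← alSalamCarlitz_eq_sum]
  simp only [C_mul, C_add, C_1, pow_succ]
  ring

theorem C_mul_alSalamCarlitz_succ_comp_C_mul_X (c : R) (n : ℕ) :
    C q * (alSalamCarlitz q a (n + 1)).comp (C (q * c) * X) =
      C (q ^ (n + 1)) * (C (q * c) * X - C (1 + a)) * (alSalamCarlitz q a n).comp (C c * X) -
        C (a * (q - 1) * q ^ n) * (qDeriv q (alSalamCarlitz q a n)).comp (C c * X) := by
  have h := congrArg (·.comp (C c * X)) (C_mul_alSalamCarlitz_succ_comp q a n)
  simp only [mul_comp, sub_comp, C_comp, X_comp, comp_assoc] at h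
  rwa [← mul_assoc, ← C_mul] at h

end AlSalamCarlitz

section Rescaled

variable {R : Type*} [CommRing R]

noncomputable def rescaledAlSalamCarlitz (q t₁ : Rˣ) (n : ℕ) : R[X] :=
  C ((t₁ : R) ^ n * ((q⁻¹ : Rˣ) : R) ^ (n ^ 2)) *
    (alSalamCarlitz (q : R) (-((t₁⁻¹ : Rˣ) : R) - 1) n).comp
      (C ((q : R) ^ n * ((t₁⁻¹ : Rˣ) : R)) * X)

theorem rescaledAlSalamCarlitz_zero (q t₁ : Rˣ) : rescaledAlSalamCarlitz q t₁ 0 = 1 := by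
  simp [rescaledAlSalamCarlitz, alSalamCarlitz_eq_sum, alSalamCarlitzCoeff_zero_right]

theorem rescaledAlSalamCarlitz_succ (q t₁ : Rˣ) (n : ℕ) :
    rescaledAlSalamCarlitz q t₁ (n + 1) =
      X * rescaledAlSalamCarlitz q t₁ n +
        C (((q : R) - 1) * (t₁ : R) * ((t₁ : R) + 1) * ((q⁻¹ : Rˣ) : R) ^ (2 * (n + 1))) *
          qDeriv (q : R) (rescaledAlSalamCarlitz q t₁ n) +
        C (((q⁻¹ : Rˣ) : R) ^ (n + 1)) * rescaledAlSalamCarlitz q t₁ n := by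
  simp only [rescaledAlSalamCarlitz]
  set Q : R := (q : R)
  set Q' : R := ((q⁻¹ : Rˣ) : R)
  set T : R := (t₁ : R)
  set T' : R := ((t₁⁻¹ : Rˣ) : R)
  have hrec := C_mul_alSalamCarlitz_succ_comp_C_mul_X Q (-T' - 1) (Q ^ n * T') n
  rw [← mul_assoc, ← pow_succ'] at hrec
  have hK :
      T ^ (n + 1) * Q' ^ ((n + 1) ^ 2) = T ^ n * Q' ^ (n ^ 2) * T * Q' ^ (2 * (n + 1)) * Q := by
    linear_combination (-(T ^ (n + 1) * Q' ^ ((n + 1) ^ 2))) * Units.inv_mul q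
  rw [qDeriv_C_mul, qDeriv_comp_C_mul_X, hK, C_mul (b := Q), mul_assoc _ (C Q), hrec]
  set K : R := T ^ n * Q' ^ (n ^ 2)
  set V := (alSalamCarlitz Q (-T' - 1) n).comp (C (Q ^ n * T') * X)
  set W := (qDeriv Q (alSalamCarlitz Q (-T' - 1) n)).comp (C (Q ^ n * T') * X)
  have hT : C T * C T' = 1 := by rw [← C_mul, Units.mul_inv, C_1]
  have hQ : C Q' ^ (n + 1) * C Q ^ (n + 1) = 1 := by
    rw [← mul_pow, ← C_mul, Units.inv_mul, C_1, one_pow]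
  simp only [map_mul, map_add, map_sub, map_neg, map_pow, map_one]
  -- modulo `t₁ t₁⁻¹ = 1` and `q⁻ⁿ⁻¹ qⁿ⁺¹ = 1`, the coefficients of `X * V`, `V`, `W` agree
  linear_combination
    (C K * (C Q' ^ (n + 1) * C Q ^ (n + 1)) ^ 2 * X * V
      + C K * C Q' ^ (n + 1) * (C Q' ^ (n + 1) * C Q ^ (n + 1)) * V
      - C K * C Q' ^ (2 * (n + 1)) * (C Q - 1) * C Q ^ n * C T * W) * hT
    + (C K * (C Q' ^ (n + 1) * C Q ^ (n + 1) + 1) * X * V + C K * C Q' ^ (n + 1) * V) * hQ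

end Rescaled

/-- Lemma `lem:A2`: for all `n`, `p_n(x; t, q) = t₁ⁿ q^{−n²} U_n^{(−t₁⁻¹−1)}(qⁿ t₁⁻¹ x; q)`
where `t = (q−1)t₁(t₁+1)`. -/
theorem pseq_eq_alSalamCarlitz {R : Type*} [CommRing R] (q t₁ : Rˣ) (n : ℕ) :
    pseq q t₁ n =
      Polynomial.C ((t₁ : R) ^ n * ((q⁻¹ : Rˣ) : R) ^ (n ^ 2)) *
        (alSalamCarlitz (q : R) (-((t₁⁻¹ : Rˣ) : R) - 1) n).comp
          (Polynomial.C ((q : R) ^ n * ((t₁⁻¹ : Rˣ) : R)) * Polynomial.X) := by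
  change pseq q t₁ n = rescaledAlSalamCarlitz q t₁ n
  induction n with
  | zero => rw [pseq, rescaledAlSalamCarlitz_zero]
  | succ n ih => rw [pseq, ih, rescaledAlSalamCarlitz_succ]
end
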